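/- arXiv:2602.05511 — 11 statements merged into one kernel-verified Lean document; each statement's English description precedes it below -/
import Mathlib

section
/- Let σ > 0 be a real number and m ≥ 0 an integer. Then c*_{m,2}(σ) ≤ (2^σ − 2^{−m})/(2^σ − 1). -/
open Finset
open intervalIntegral MeasureTheory

/-- γ_{j,b} = ∑_{a=1}^{b-1} a^j for a natural exponent j. -/
def gammaNat (b j : ℕ) : ℕ := ∑ a ∈ Finset.Ico 1 b, a ^ j

/-- The coefficients c*_{m,b}(s): c*_{0,b}(s) = 1 and, for m ≥ 1,
c*_{m,b}(s) = (1/(b^{s+m} − b)) ∑_{j=1}^{m} [(s+m)⋯(s+m−j+1)/j!] γ_{j,b} c*_{m−j,b}(s). -/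
noncomputable def cstarC (b : ℕ) (s : ℂ) : ℕ → ℂ
  | 0 => 1
  | (m + 1) =>
      (1 / ((b : ℂ) ^ (s + (m : ℂ) + 1) - (b : ℂ))) *
        ∑ j ∈ Finset.range (m + 1),
          ((∏ i ∈ Finset.range (j + 1), (s + (m : ℂ) + 1 - (i : ℂ))) / (Nat.factorial (j + 1) : ℂ))
            * (gammaNat b (j + 1) : ℂ) * cstarC b s (m - j)
  decreasing_by exact Nat.lt_succ_of_le (Nat.sub_le m j)

/-- The coefficients c*_{m,b}(σ) for real σ (real-valued version of the same recurrence). -/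
noncomputable def cstarR (b : ℕ) (σ : ℝ) : ℕ → ℝ
  | 0 => 1
  | (m + 1) =>
      (1 / ((b : ℝ) ^ (σ + (m : ℝ) + 1) - (b : ℝ))) *
        ∑ j ∈ Finset.range (m + 1),
          ((∏ i ∈ Finset.range (j + 1), (σ + (m : ℝ) + 1 - (i : ℝ))) / (Nat.factorial (j + 1) : ℝ))
            * (gammaNat b (j + 1) : ℝ) * cstarR b σ (m - j)
  decreasing_by exact Nat.lt_succ_of_le (Nat.sub_le m j)

noncomputable def binR (x : ℝ) (k : ℕ) : ℝ := (∏ i ∈ Finset.range k, (x - i)) / (Nat.factorial k)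

noncomputable def II (n : ℕ) (x : ℝ) : ℝ :=
  ∫ t in (0:ℝ)..(1/2:ℝ), t ^ n * (1 - t) ^ (x - n - 1)

lemma intgr (n : ℕ) (y : ℝ) :
    IntervalIntegrable (fun t : ℝ => t ^ n * (1 - t) ^ y) volume 0 (1/2) := by
  apply ContinuousOn.intervalIntegrable
  apply ContinuousOn.mul (continuous_pow n).continuousOn
  apply ContinuousOn.rpow_const (continuous_const.sub continuous_id).continuousOn
  intro t ht
  left
  rw [Set.uIcc_of_le (by norm_num : (0:ℝ) ≤ 1/2)] at ht
  have := ht.2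
  intro h
  simp only [Pi.sub_apply, id] at h
  linarith [ht.2]

lemma half_rpow (x : ℝ) : (1/2 : ℝ) ^ x = ((2:ℝ) ^ x)⁻¹ := by
  rw [one_div, Real.inv_rpow (by norm_num : (0:ℝ) ≤ 2)]

lemma II0 (x : ℝ) : x * II 0 x = 1 - ((2:ℝ) ^ x)⁻¹ := by
  have hderiv : ∀ t ∈ Set.uIcc (0:ℝ) (1/2),
      HasDerivAt (fun t : ℝ => -(1 - t) ^ x) (x * ((1 - t) ^ (x - 1))) t := by
    intro t ht
    rw [Set.uIcc_of_le (by norm_num : (0:ℝ) ≤ 1/2)] at ht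
    have h1 : (1:ℝ) - t ≠ 0 := by
      intro h; linarith [ht.2]
    have h2 : HasDerivAt (fun t : ℝ => (1:ℝ) - t) (-1) t := by
      simpa using (hasDerivAt_id t).const_sub 1
    have := (h2.rpow_const (p := x) (Or.inl h1)).neg
    refine this.congr_deriv ?_
    ring
  have hint : IntervalIntegrable (fun t : ℝ => x * ((1 - t) ^ (x - 1))) volume 0 (1/2) := by
    have := (intgr 0 (x - 1)).const_mul x
    simpa using this
  have := intervalIntegral.integral_eq_sub_of_hasDerivAt hderiv hint
  rw [intervalIntegral.integral_const_mul] at this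
  have hII : II 0 x = ∫ t in (0:ℝ)..(1/2:ℝ), (1 - t) ^ (x - 1) := by
    unfold II; congr 1; ext t; simp
  rw [← hII] at this
  rw [this]
  norm_num [half_rpow]
  ring

lemma IIstep (n : ℕ) (x : ℝ) :
    (x - n - 1) * II (n+1) x = (n+1) * II n x - ((2:ℝ)^x)⁻¹ := by
  have hce : x - ((n:ℝ)+1) - 1 = x - n - 2 := by ring
  have hderiv : ∀ t ∈ Set.uIcc (0:ℝ) (1/2),
      HasDerivAt (fun t : ℝ => -(t ^ (n+1) * (1 - t) ^ (x - n - 1)))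
        ((x - n - 1) * (t ^ (n+1) * (1 - t) ^ (x - n - 2))
          - ((n:ℝ)+1) * (t ^ n * (1 - t) ^ (x - n - 1))) t := by
    intro t ht
    rw [Set.uIcc_of_le (by norm_num : (0:ℝ) ≤ 1/2)] at ht
    have h1 : (1:ℝ) - t ≠ 0 := by intro h; linarith [ht.2]
    have h2 : HasDerivAt (fun t : ℝ => (1:ℝ) - t) (-1) t := by
      simpa using (hasDerivAt_id t).const_sub 1
    have h3 : HasDerivAt (fun t : ℝ => t ^ (n+1)) (((n:ℝ)+1) * t ^ n) t := by
      simpa using hasDerivAt_pow (n+1) t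
    have h4 := h2.rpow_const (p := x - n - 1) (Or.inl h1)
    have := ((h3.mul h4).neg)
    refine this.congr_deriv ?_
    have e : x - (n:ℝ) - 1 - 1 = x - n - 2 := by ring
    rw [← e]
    ring
  have hint : IntervalIntegrable
      (fun t : ℝ => (x - n - 1) * (t ^ (n+1) * (1 - t) ^ (x - n - 2))
        - ((n:ℝ)+1) * (t ^ n * (1 - t) ^ (x - n - 1))) volume 0 (1/2) :=
    ((intgr (n+1) (x - n - 2)).const_mul _).sub ((intgr n (x - n - 1)).const_mul _)
  have key := intervalIntegral.integral_eq_sub_of_hasDerivAt hderiv hint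
  rw [intervalIntegral.integral_sub ((intgr (n+1) (x - n - 2)).const_mul _)
      ((intgr n (x - n - 1)).const_mul _),
    intervalIntegral.integral_const_mul, intervalIntegral.integral_const_mul] at key
  have hII1 : II (n+1) x = ∫ t in (0:ℝ)..(1/2:ℝ), t ^ (n+1) * (1 - t) ^ (x - n - 2) := by
    unfold II; congr 1; ext t; rw [show x - ((n+1:ℕ):ℝ) - 1 = x - n - 2 by push_cast; ring]
  have hII2 : II n x = ∫ t in (0:ℝ)..(1/2:ℝ), t ^ n * (1 - t) ^ (x - n - 1) := rfl
  rw [← hII1, ← hII2] at key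
  have hval : (fun t : ℝ => -(t ^ (n+1) * (1 - t) ^ (x - n - 1))) (1/2)
      - (fun t : ℝ => -(t ^ (n+1) * (1 - t) ^ (x - n - 1))) 0 = -((2:ℝ)^x)⁻¹ := by
    simp only [zero_pow (Nat.succ_ne_zero n), zero_mul, neg_zero, sub_zero]
    have : ((1:ℝ)/2) ^ (n+1) = (1/2:ℝ) ^ ((n+1:ℕ):ℝ) := by
      rw [Real.rpow_natCast]
    rw [show (1:ℝ) - 1/2 = 1/2 by norm_num, this,
      ← Real.rpow_add (by norm_num : (0:ℝ) < 1/2),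
      show ((n+1:ℕ):ℝ) + (x - n - 1) = x by push_cast; ring, half_rpow]
  rw [hval] at key
  linarith [key]

lemma two_rpow_ne (x : ℝ) : (2:ℝ) ^ x ≠ 0 := (Real.rpow_pos_of_pos two_pos x).ne'

lemma ident (n : ℕ) (x : ℝ) :
    (2:ℝ) ^ x - ∑ j ∈ Finset.range (n+1), binR x j
      = (∏ i ∈ Finset.range (n+1), (x - i)) / (Nat.factorial n) * ((2:ℝ) ^ x * II n x) := by
  induction n with
  | zero =>
      have h0 := II0 x
      simp only [zero_add, Finset.sum_range_one, Finset.prod_range_one, binR, Finset.range_zero,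
        Finset.prod_empty, Nat.factorial_zero, Nat.cast_one, Nat.cast_zero, sub_zero]
      have h1 : (2:ℝ) ^ x * (x * II 0 x) = (2:ℝ) ^ x - 1 := by
        rw [h0, mul_sub, mul_one, mul_inv_cancel₀ (two_rpow_ne x)]
      linear_combination -h1
  | succ n ih =>
      have hstep := IIstep n x
      have hfac : ((Nat.factorial (n+1) : ℝ)) = ((n:ℝ)+1) * (Nat.factorial n : ℝ) := by
        push_cast [Nat.factorial_succ]; ring
      have hfne : (Nat.factorial n : ℝ) ≠ 0 := Nat.cast_ne_zero.mpr (Nat.factorial_ne_zero n)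
      rw [Finset.sum_range_succ, Finset.prod_range_succ]
      have hbin : binR x (n+1) = (∏ i ∈ Finset.range (n+1), (x - i)) / (Nat.factorial (n+1)) := rfl
      rw [hbin]
      rw [show x - ((n+1:ℕ):ℝ) = x - n - 1 by push_cast; ring]
      set P := ∏ i ∈ Finset.range (n+1), (x - (i:ℝ)) with hP
      -- goal: 2^x - (S + P/(n+1)!) = P*(x-n-1)/(n+1)! * (2^x * II (n+1) x)
      have expand : P * (x - (n:ℝ) - 1) / (Nat.factorial (n+1)) * ((2:ℝ)^x * II (n+1) x)
          = P / (Nat.factorial (n+1)) * ((2:ℝ)^x * ((x - (n:ℝ) - 1) * II (n+1) x)) := by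
        ring
      rw [expand, hstep]
      rw [show (((n:ℝ)+1) * II n x - ((2:ℝ)^x)⁻¹) = ((n:ℝ)+1) * II n x - ((2:ℝ)^x)⁻¹ from rfl]
      have : P / (Nat.factorial (n+1)) * ((2:ℝ)^x * (((n:ℝ)+1) * II n x - ((2:ℝ)^x)⁻¹))
          = P / (Nat.factorial n) * ((2:ℝ)^x * II n x) - P / (Nat.factorial (n+1)) := by
        rw [hfac]
        field_simp
      rw [this, ← ih]
      ring

lemma lemL (n : ℕ) (x : ℝ) (h : (n:ℝ) ≤ x) :
    ∑ j ∈ Finset.range (n+1), binR x j ≤ (2:ℝ) ^ x := by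
  have hid := ident n x
  have hP : 0 ≤ ∏ i ∈ Finset.range (n+1), (x - (i:ℝ)) := by
    apply Finset.prod_nonneg
    intro i hi
    have : (i:ℝ) ≤ n := by
      exact_mod_cast Nat.le_of_lt_succ (Finset.mem_range.mp hi)
    linarith
  have hII : 0 ≤ II n x := by
    apply intervalIntegral.integral_nonneg (by norm_num : (0:ℝ) ≤ 1/2)
    intro t ht
    have h1 : (0:ℝ) ≤ 1 - t := by linarith [ht.2, (by norm_num : (1/2:ℝ) ≤ 1)]
    exact mul_nonneg (pow_nonneg ht.1 n) (Real.rpow_nonneg h1 _)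
  nlinarith [Real.rpow_pos_of_pos (two_pos) x,
    mul_nonneg (mul_nonneg (div_nonneg hP (Nat.cast_nonneg (Nat.factorial n)))
      (Real.rpow_pos_of_pos two_pos x).le) hII]

lemma gamma2 (j : ℕ) : ((gammaNat 2 j : ℕ) : ℝ) = 1 := by
  simp [gammaNat, Finset.sum_Ico_eq_sum_range]

lemma cstar_aux (σ : ℝ) (hσ : 0 < σ) :
    ∀ m : ℕ, 0 ≤ cstarR 2 σ m ∧
      cstarR 2 σ m ≤ ((2:ℝ)^σ - (2:ℝ)^(-(m:ℝ))) / ((2:ℝ)^σ - 1) := by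
  have hB1 : (1:ℝ) < (2:ℝ)^σ := by
    have := (Real.rpow_lt_rpow_left_iff (x := 2) (y := (0:ℝ)) (z := σ) one_lt_two).mpr hσ
    simpa using this
  intro m
  induction m using Nat.strong_induction_on with
  | _ m ih =>
    cases m with
    | zero =>
        constructor
        · rw [cstarR]; norm_num
        · rw [cstarR]
          simp only [Nat.cast_zero, neg_zero, Real.rpow_zero]
          rw [div_self (by linarith : (2:ℝ)^σ - 1 ≠ 0)]
    | succ m =>
        have hrec : cstarR 2 σ (m+1) =
            (1 / ((2:ℝ)^(σ + (m:ℝ) + 1) - 2)) *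
              ∑ j ∈ Finset.range (m+1), binR (σ + (m:ℝ) + 1) (j+1) * cstarR 2 σ (m - j) := by
          rw [cstarR]
          norm_num [gamma2, binR]
        have hx1 : (1:ℝ) < σ + (m:ℝ) + 1 := by
          have : (0:ℝ) ≤ (m:ℝ) := Nat.cast_nonneg m
          linarith
        have hX2 : (2:ℝ) < (2:ℝ)^(σ + (m:ℝ) + 1) := by
          have := (Real.rpow_lt_rpow_left_iff (x := 2) (y := (1:ℝ)) (z := σ + (m:ℝ) + 1)
            one_lt_two).mpr hx1
          simpa using this
        have hL := lemL (m+1) (σ + (m:ℝ) + 1) (by push_cast; linarith)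
        have hb0 : binR (σ + (m:ℝ) + 1) 0 = 1 := by simp [binR]
        have hSle : ∑ j ∈ Finset.range (m+1), binR (σ + (m:ℝ) + 1) (j+1)
            ≤ (2:ℝ)^(σ + (m:ℝ) + 1) - 1 := by
          have h := Finset.sum_range_succ' (fun j => binR (σ + (m:ℝ) + 1) j) (m+1)
          rw [hb0] at h
          linarith [hL, h.symm.le, h.le]
        have hbin_nonneg : ∀ j ∈ Finset.range (m+1), 0 ≤ binR (σ + (m:ℝ) + 1) (j+1) := by
          intro j hj
          have hj' : j ≤ m := Nat.lt_succ_iff.mp (Finset.mem_range.mp hj)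
          apply div_nonneg _ (Nat.cast_nonneg _)
          apply Finset.prod_nonneg
          intro i hi
          have hij : i ≤ j := Nat.lt_succ_iff.mp (Finset.mem_range.mp hi)
          have : (i:ℝ) ≤ (m:ℝ) := by exact_mod_cast le_trans hij hj'
          linarith
        have h2mneg : (2:ℝ)^(-(m:ℝ)) ≤ 1 :=
          Real.rpow_le_one_of_one_le_of_nonpos one_le_two (neg_nonpos.mpr (Nat.cast_nonneg m))
        have hT_nonneg : 0 ≤ ((2:ℝ)^σ - (2:ℝ)^(-(m:ℝ))) / ((2:ℝ)^σ - 1) := by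
          apply div_nonneg <;> linarith
        have hcT : ∀ j ∈ Finset.range (m+1),
            cstarR 2 σ (m - j) ≤ ((2:ℝ)^σ - (2:ℝ)^(-(m:ℝ))) / ((2:ℝ)^σ - 1) := by
          intro j hj
          refine le_trans (ih (m-j) (Nat.lt_succ_of_le (Nat.sub_le m j))).2 ?_
          have hexp : -((m:ℝ)) ≤ -(((m-j:ℕ)):ℝ) := by
            have : ((m-j:ℕ):ℝ) ≤ (m:ℝ) := by exact_mod_cast Nat.sub_le m j
            linarith
          have hrr := (Real.rpow_le_rpow_left_iff (x := 2) one_lt_two).mpr hexp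
          gcongr
        have hc_nonneg : ∀ j ∈ Finset.range (m+1), 0 ≤ cstarR 2 σ (m - j) := fun j _ =>
          (ih (m-j) (Nat.lt_succ_of_le (Nat.sub_le m j))).1
        have hXpos : (0:ℝ) < (2:ℝ)^(σ + (m:ℝ) + 1) - 2 := by linarith
        have hsum_le : ∑ j ∈ Finset.range (m+1), binR (σ + (m:ℝ) + 1) (j+1) * cstarR 2 σ (m - j)
            ≤ ((2:ℝ)^(σ + (m:ℝ) + 1) - 1) * (((2:ℝ)^σ - (2:ℝ)^(-(m:ℝ))) / ((2:ℝ)^σ - 1)) := by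
          calc ∑ j ∈ Finset.range (m+1), binR (σ + (m:ℝ) + 1) (j+1) * cstarR 2 σ (m - j)
              ≤ ∑ j ∈ Finset.range (m+1), binR (σ + (m:ℝ) + 1) (j+1) *
                  (((2:ℝ)^σ - (2:ℝ)^(-(m:ℝ))) / ((2:ℝ)^σ - 1)) :=
                Finset.sum_le_sum (fun j hj =>
                  mul_le_mul_of_nonneg_left (hcT j hj) (hbin_nonneg j hj))
            _ = (∑ j ∈ Finset.range (m+1), binR (σ + (m:ℝ) + 1) (j+1)) *
                  (((2:ℝ)^σ - (2:ℝ)^(-(m:ℝ))) / ((2:ℝ)^σ - 1)) := by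
                rw [Finset.sum_mul]
            _ ≤ ((2:ℝ)^(σ + (m:ℝ) + 1) - 1) *
                  (((2:ℝ)^σ - (2:ℝ)^(-(m:ℝ))) / ((2:ℝ)^σ - 1)) :=
                mul_le_mul_of_nonneg_right hSle hT_nonneg
        constructor
        · rw [hrec]
          exact mul_nonneg (by positivity)
            (Finset.sum_nonneg fun j hj => mul_nonneg (hbin_nonneg j hj) (hc_nonneg j hj))
        · rw [hrec]
          have step1 : (1 / ((2:ℝ)^(σ + (m:ℝ) + 1) - 2)) *
              (∑ j ∈ Finset.range (m+1), binR (σ + (m:ℝ) + 1) (j+1) * cstarR 2 σ (m - j))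
              ≤ (1 / ((2:ℝ)^(σ + (m:ℝ) + 1) - 2)) * (((2:ℝ)^(σ + (m:ℝ) + 1) - 1) *
                  (((2:ℝ)^σ - (2:ℝ)^(-(m:ℝ))) / ((2:ℝ)^σ - 1))) :=
            mul_le_mul_of_nonneg_left hsum_le (by positivity)
          refine le_trans step1 (le_of_eq ?_)
          have hXval : (2:ℝ)^(σ + (m:ℝ) + 1) = (2:ℝ)^σ * (2:ℝ)^m * 2 := by
            rw [Real.rpow_add two_pos, Real.rpow_add two_pos, Real.rpow_one, Real.rpow_natCast]
          have hm1 : (2:ℝ)^(-(m:ℝ)) = ((2:ℝ)^m)⁻¹ := by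
            rw [Real.rpow_neg two_pos.le, Real.rpow_natCast]
          have hm2 : (2:ℝ)^(-((m+1:ℕ):ℝ)) = ((2:ℝ)^(m+1))⁻¹ := by
            rw [Real.rpow_neg two_pos.le, Real.rpow_natCast]
          rw [hXval] at hXpos ⊢
          rw [hm1, hm2]
          have h2m : (0:ℝ) < (2:ℝ)^m := by positivity
          have hne1 : (2:ℝ)^σ - 1 ≠ 0 := by linarith
          have hne2 : (2:ℝ)^σ * (2:ℝ)^m * 2 - 2 ≠ 0 := ne_of_gt hXpos
          have hne3 : (2:ℝ)^σ * (2:ℝ)^m - 1 ≠ 0 := by nlinarith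
          field_simp
          ring

/-- For σ > 0 and m ≥ 0, c*_{m,2}(σ) ≤ (2^σ − 2^{−m})/(2^σ − 1). -/
theorem cstar_upper_bound_b2 (σ : ℝ) (hσ : 0 < σ) (m : ℕ) :
    cstarR 2 σ m ≤ ((2 : ℝ) ^ σ - (2 : ℝ) ^ (-(m : ℝ))) / ((2 : ℝ) ^ σ - 1) := by
  exact (cstar_aux σ hσ m).2
end

section
/- Let s = σ + it with σ > 0 real, and let m ≥ 0 be an integer. Then |c*_{m,2}(s)| ≤ (|(s+1)_m|/(σ+1)_m) · c*_{m,2}(σ), where (z)_m = z(z+1)⋯(z+m−1) denotes the Pochhammer symbol. -/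
open Finset

lemma gammaNat_two (j : ℕ) : gammaNat 2 j = 1 := by simp [gammaNat]

lemma prod_factor_eq {R : Type*} [CommRing R] (z : R) (m j : ℕ) (hj : j ≤ m) :
    (∏ i ∈ Finset.range (m - j), (z + 1 + (i : R))) *
      (∏ i ∈ Finset.range (j + 1), (z + (m : R) + 1 - (i : R))) =
    ∏ i ∈ Finset.range (m + 1), (z + 1 + (i : R)) := by
  have hm : m + 1 = (m - j) + (j + 1) := by omega
  conv_rhs => rw [hm, Finset.prod_range_add]
  congr 1
  rw [← Finset.prod_range_reflect (fun i => z + (m : R) + 1 - (i : R)) (j+1)]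
  apply Finset.prod_congr rfl
  intro i hi
  simp only [Finset.mem_range] at hi
  have h1 : ((j + 1 - 1 - i : ℕ) : R) = (j : R) - i := by
    have : j + 1 - 1 - i = j - i := by omega
    rw [this, Nat.cast_sub (by omega : i ≤ j)]
  have h2 : ((m - j + i : ℕ) : R) = (m : R) - j + i := by
    push_cast [Nat.cast_sub hj]; ring
  rw [h1, h2]; ring

lemma denom_pos (σ : ℝ) (hσ : 0 < σ) (m : ℕ) : 0 < (2:ℝ) ^ (σ + (m:ℝ) + 1) - 2 := by
  have h1 : (2:ℝ) ^ (1:ℝ) < (2:ℝ) ^ (σ + (m:ℝ) + 1) := by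
    apply Real.rpow_lt_rpow_of_exponent_lt (by norm_num)
    have : (0:ℝ) ≤ (m:ℝ) := Nat.cast_nonneg m
    linarith
  rw [Real.rpow_one] at h1
  linarith

lemma prodR_pos (σ : ℝ) (hσ : 0 < σ) (m : ℕ) :
    0 < ∏ i ∈ Finset.range m, (σ + 1 + (i : ℝ)) := by
  apply Finset.prod_pos
  intro i _
  have : (0:ℝ) ≤ (i:ℝ) := Nat.cast_nonneg i
  linarith

lemma prodRf_pos (σ : ℝ) (hσ : 0 < σ) (m j : ℕ) (hj : j ≤ m) :
    0 < ∏ i ∈ Finset.range (j + 1), (σ + (m:ℝ) + 1 - (i : ℝ)) := by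
  apply Finset.prod_pos
  intro i hi
  simp only [Finset.mem_range] at hi
  have : (i:ℝ) ≤ (m:ℝ) := by exact_mod_cast Nat.le_of_lt_succ (lt_of_lt_of_le hi (by omega))
  linarith

lemma cstarR_two_pos (σ : ℝ) (hσ : 0 < σ) : ∀ m, 0 < cstarR 2 σ m := by
  intro m
  induction m using Nat.strong_induction_on with
  | _ m ih =>
    match m with
    | 0 => rw [cstarR]; norm_num
    | (m + 1) =>
      rw [cstarR]
      have hb : ((2:ℕ):ℝ) = (2:ℝ) := by norm_num
      rw [hb]
      apply mul_pos
      · exact one_div_pos.mpr (denom_pos σ hσ m)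
      · apply Finset.sum_pos _ ⟨0, Finset.mem_range.mpr (Nat.succ_pos m)⟩
        intro j hj
        simp only [Finset.mem_range] at hj
        apply mul_pos (mul_pos _ _)
        · exact ih (m - j) (Nat.lt_succ_of_le (Nat.sub_le m j))
        · exact div_pos (prodRf_pos σ hσ m j (by omega)) (by positivity)
        · rw [gammaNat_two]; norm_num

lemma key (s : ℂ) (hs : 0 < s.re) : ∀ m,
    ‖cstarC 2 s m‖ * (∏ i ∈ Finset.range m, (s.re + 1 + (i : ℝ))) ≤
      ‖∏ i ∈ Finset.range m, (s + 1 + (i : ℂ))‖ * cstarR 2 s.re m := by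
  intro m
  induction m using Nat.strong_induction_on with
  | _ m ih =>
    match m with
    | 0 => rw [cstarC, cstarR]; simp
    | (m + 1) =>
      set σ := s.re with hσdef
      have hA : 0 < (2:ℝ) ^ (σ + (m:ℝ) + 1) - 2 := denom_pos σ hs m
      -- norm of complex denominator
      have hbC : ((2:ℕ):ℂ) = (2:ℂ) := by norm_num
      have hDnorm : (2:ℝ) ^ (σ + (m:ℝ) + 1) - 2 ≤ ‖(2:ℂ) ^ (s + (m:ℂ) + 1) - 2‖ := by
        have h1 : ‖(2:ℂ) ^ (s + (m:ℂ) + 1)‖ = (2:ℝ) ^ (σ + (m:ℝ) + 1) := by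
          skip
          have h0 : ((2:ℂ)) = ((2:ℝ):ℂ) := by norm_num
          have hre : (s + (m:ℂ) + 1).re = σ + (m:ℝ) + 1 := by simp [hσdef]
          rw [h0, Complex.norm_cpow_eq_rpow_re_of_pos (by norm_num), hre]
        have h2 := norm_sub_norm_le ((2:ℂ) ^ (s + (m:ℂ) + 1)) (2:ℂ)
        have h3 : ‖(2:ℂ)‖ = 2 := by norm_num
        rw [h1, h3] at h2
        linarith
      have hnorm : ‖cstarC 2 s (m+1)‖ ≤
          (1 / ((2:ℝ) ^ (σ + (m:ℝ) + 1) - 2)) *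
            ∑ j ∈ Finset.range (m+1),
              ‖∏ i ∈ Finset.range (j + 1), (s + (m : ℂ) + 1 - (i : ℂ))‖ / (Nat.factorial (j+1) : ℝ)
                * ‖cstarC 2 s (m - j)‖ := by
        rw [cstarC, hbC, norm_mul, norm_div, norm_one]
        apply mul_le_mul
        · exact one_div_le_one_div_of_le hA hDnorm
        · refine le_trans (norm_sum_le _ _) (le_of_eq (Finset.sum_congr rfl ?_))
          intro j hj
          rw [norm_mul, norm_mul, norm_div, gammaNat_two]
          norm_num
        · positivity
        · positivity
      calc ‖cstarC 2 s (m+1)‖ * (∏ i ∈ Finset.range (m+1), (σ + 1 + (i : ℝ)))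
          ≤ ((1 / ((2:ℝ) ^ (σ + (m:ℝ) + 1) - 2)) *
            ∑ j ∈ Finset.range (m+1),
              ‖∏ i ∈ Finset.range (j + 1), (s + (m : ℂ) + 1 - (i : ℂ))‖ / (Nat.factorial (j+1) : ℝ)
                * ‖cstarC 2 s (m - j)‖) * (∏ i ∈ Finset.range (m+1), (σ + 1 + (i : ℝ))) := by
            exact mul_le_mul_of_nonneg_right hnorm (le_of_lt (prodR_pos σ hs (m+1)))
        _ = (1 / ((2:ℝ) ^ (σ + (m:ℝ) + 1) - 2)) *
            ∑ j ∈ Finset.range (m+1),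
              (‖∏ i ∈ Finset.range (j + 1), (s + (m : ℂ) + 1 - (i : ℂ))‖ / (Nat.factorial (j+1) : ℝ)
                * ‖cstarC 2 s (m - j)‖ * (∏ i ∈ Finset.range (m+1), (σ + 1 + (i : ℝ)))) := by
            rw [mul_assoc, Finset.sum_mul]
        _ ≤ (1 / ((2:ℝ) ^ (σ + (m:ℝ) + 1) - 2)) *
            ∑ j ∈ Finset.range (m+1),
              (‖∏ i ∈ Finset.range (m+1), (s + 1 + (i : ℂ))‖ *
                ((∏ i ∈ Finset.range (j + 1), (σ + (m:ℝ) + 1 - (i : ℝ))) / (Nat.factorial (j+1) : ℝ)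
                  * cstarR 2 σ (m - j))) := by
            apply mul_le_mul_of_nonneg_left _ (le_of_lt (one_div_pos.mpr hA))
            apply Finset.sum_le_sum
            intro j hj
            simp only [Finset.mem_range] at hj
            have hjm : j ≤ m := by omega
            have hQ : (∏ i ∈ Finset.range (m+1), (σ + 1 + (i : ℝ))) =
                (∏ i ∈ Finset.range (m - j), (σ + 1 + (i : ℝ))) *
                  (∏ i ∈ Finset.range (j + 1), (σ + (m:ℝ) + 1 - (i : ℝ))) :=
              (prod_factor_eq σ m j hjm).symm
            have hP : ‖∏ i ∈ Finset.range (m+1), (s + 1 + (i : ℂ))‖ =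
                ‖∏ i ∈ Finset.range (m - j), (s + 1 + (i : ℂ))‖ *
                  ‖∏ i ∈ Finset.range (j + 1), (s + (m:ℂ) + 1 - (i : ℂ))‖ := by
              rw [← norm_mul, prod_factor_eq s m j hjm]
            have hih := ih (m - j) (Nat.lt_succ_of_le (Nat.sub_le m j))
            have hc1 : 0 ≤ ‖∏ i ∈ Finset.range (j + 1), (s + (m:ℂ) + 1 - (i : ℂ))‖ *
                (∏ i ∈ Finset.range (j + 1), (σ + (m:ℝ) + 1 - (i : ℝ))) / (Nat.factorial (j+1) : ℝ) := by
              have := prodRf_pos σ hs m j hjm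
              positivity
            calc ‖∏ i ∈ Finset.range (j + 1), (s + (m : ℂ) + 1 - (i : ℂ))‖ / (Nat.factorial (j+1) : ℝ)
                  * ‖cstarC 2 s (m - j)‖ * (∏ i ∈ Finset.range (m+1), (σ + 1 + (i : ℝ)))
                = (‖∏ i ∈ Finset.range (j + 1), (s + (m:ℂ) + 1 - (i : ℂ))‖ *
                    (∏ i ∈ Finset.range (j + 1), (σ + (m:ℝ) + 1 - (i : ℝ))) / (Nat.factorial (j+1) : ℝ)) *
                    (‖cstarC 2 s (m - j)‖ * (∏ i ∈ Finset.range (m - j), (σ + 1 + (i : ℝ)))) := by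
                  rw [hQ]; ring
              _ ≤ (‖∏ i ∈ Finset.range (j + 1), (s + (m:ℂ) + 1 - (i : ℂ))‖ *
                    (∏ i ∈ Finset.range (j + 1), (σ + (m:ℝ) + 1 - (i : ℝ))) / (Nat.factorial (j+1) : ℝ)) *
                    (‖∏ i ∈ Finset.range (m - j), (s + 1 + (i : ℂ))‖ * cstarR 2 σ (m - j)) :=
                  mul_le_mul_of_nonneg_left hih hc1
              _ = ‖∏ i ∈ Finset.range (m+1), (s + 1 + (i : ℂ))‖ *
                    ((∏ i ∈ Finset.range (j + 1), (σ + (m:ℝ) + 1 - (i : ℝ))) / (Nat.factorial (j+1) : ℝ)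
                      * cstarR 2 σ (m - j)) := by
                  rw [hP]; ring
        _ = ‖∏ i ∈ Finset.range (m+1), (s + 1 + (i : ℂ))‖ * cstarR 2 σ (m+1) := by
            rw [cstarR]
            have hbR : ((2:ℕ):ℝ) = (2:ℝ) := by norm_num
            rw [hbR]
            conv_lhs => rw [Finset.mul_sum]
            conv_rhs => rw [Finset.mul_sum, Finset.mul_sum]
            apply Finset.sum_congr rfl
            intro j hj
            rw [gammaNat_two]
            push_cast
            ring


/-- For s = σ + it with σ = Re s > 0 and m ≥ 0,
|c*_{m,2}(s)| ≤ (|(s+1)_m|/(σ+1)_m) · c*_{m,2}(σ), with (z)_m the Pochhammer symbol. -/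
theorem cstar_abs_le_pochhammer_ratio_b2 (s : ℂ) (hs : 0 < s.re) (m : ℕ) :
    ‖cstarC 2 s m‖ ≤
      (‖∏ i ∈ Finset.range m, (s + 1 + (i : ℂ))‖ / ∏ i ∈ Finset.range m, (s.re + 1 + (i : ℝ))) *
        cstarR 2 s.re m := by
  have h := key s hs m
  have hQ := prodR_pos s.re hs m
  rw [div_mul_eq_mul_div, le_div_iff₀ hQ]
  linarith [h]
end

section
/- Let b > 1 be an integer, σ > 0 a real number, k an integer, and set s = σ + 2πik/log b. Then for every integer m ≥ 0 there holds the equality |c*_{m,b}(s)| = (|(s+1)_m|/(σ+1)_m) · c*_{m,b}(σ), where (z)_m = z(z+1)⋯(z+m−1) denotes the Pochhammer symbol. -/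
/-!
Since `b ^ (2πik / log b) = exp (2πik) = 1`, the denominators `b ^ (s + m) - b` of the
recurrence coincide with the real numbers `b ^ (σ + m) - b`. Only the falling products
`(s + m) ⋯ (s + m - j + 1)` then differ between `s` and `σ`, and an induction on `m` shows that
they accumulate exactly to the factor `(s + 1)_m / (σ + 1)_m`. Taking absolute values finishes,
because `c*_{m,b}(σ) ≥ 0`.
-/

open Finset

theorem Complex.cpow_add_two_pi_I_mul_div_log {x : ℂ} (hx : Complex.log x ≠ 0) (z : ℂ) (k : ℤ) :
    x ^ (z + 2 * Real.pi * Complex.I * k / Complex.log x) = x ^ z := by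
  have hx0 : x ≠ 0 := by rintro rfl; exact hx Complex.log_zero
  rw [Complex.cpow_add _ _ hx0, Complex.cpow_def_of_ne_zero hx0 (_ / _),
    mul_div_cancel₀ _ hx, mul_comm _ (k : ℂ), Complex.exp_int_mul_two_pi_mul_I, mul_one]

lemma prod_range_succ_eq_mul_prod_sub {R : Type*} [CommRing R] (z : R) {m j : ℕ} (hj : j ≤ m) :
    ∏ i ∈ range (m + 1), (z + 1 + (i : R)) =
      (∏ i ∈ range (m - j), (z + 1 + (i : R))) * ∏ i ∈ range (j + 1), (z + m + 1 - i) := by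
  rw [← Nat.sub_add_cancel hj, add_assoc, prod_range_add, Nat.add_sub_cancel]
  congr 1
  rw [← prod_range_reflect]
  refine prod_congr rfl fun i hi => ?_
  have hi : i ≤ j := Nat.lt_succ_iff.mp (mem_range.mp hi)
  rw [Nat.add_sub_cancel, Nat.cast_add, Nat.cast_add, Nat.cast_sub hi]
  ring

lemma cstarC_mul_prod_eq (b : ℕ) {s t : ℂ}
    (hpow : ∀ n : ℕ, (b : ℂ) ^ (s + n + 1) = (b : ℂ) ^ (t + n + 1)) (m : ℕ) :
    cstarC b s m * ∏ i ∈ range m, (t + 1 + i) = (∏ i ∈ range m, (s + 1 + i)) * cstarC b t m := by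
  induction m using Nat.strong_induction_on with
  | _ m ih =>
    match m with
    | 0 => simp [cstarC]
    | m + 1 =>
      rw [cstarC, cstarC, hpow m, mul_assoc, mul_left_comm _ (1 / _)]
      congr 1
      rw [sum_mul, mul_sum]
      refine sum_congr rfl fun j hj => ?_
      have hj : j ≤ m := Nat.lt_succ_iff.mp (mem_range.mp hj)
      rw [prod_range_succ_eq_mul_prod_sub s hj, prod_range_succ_eq_mul_prod_sub t hj]
      linear_combination (∏ i ∈ range (j + 1), (s + m + 1 - i)) *
        (∏ i ∈ range (j + 1), (t + m + 1 - i)) * (gammaNat b (j + 1) : ℂ) / (j + 1).factorial *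
        ih (m - j) (by omega)

lemma cstarC_ofReal (b : ℕ) (σ : ℝ) (m : ℕ) : cstarC b σ m = cstarR b σ m := by
  induction m using Nat.strong_induction_on with
  | _ m ih =>
    match m with
    | 0 => simp [cstarC, cstarR]
    | m + 1 =>
      rw [cstarC, cstarR]
      push_cast [Complex.ofReal_cpow (Nat.cast_nonneg (α := ℝ) b)]
      refine congrArg _ (sum_congr rfl fun j hj => ?_)
      rw [ih (m - j) (by omega)]

lemma cstarR_nonneg {b : ℕ} (hb : 1 < b) {σ : ℝ} (hσ : 0 < σ) (m : ℕ) : 0 ≤ cstarR b σ m := by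
  induction m using Nat.strong_induction_on with
  | _ m ih =>
    match m with
    | 0 => simp [cstarR]
    | m + 1 =>
      rw [cstarR]
      have hden : (b : ℝ) < b ^ (σ + m + 1) :=
        calc (b : ℝ) = b ^ (1 : ℝ) := (Real.rpow_one _).symm
          _ < b ^ (σ + m + 1) := Real.rpow_lt_rpow_of_exponent_lt (by exact_mod_cast hb)
            (by linarith [(m.cast_nonneg : (0 : ℝ) ≤ m)])
      refine mul_nonneg (one_div_nonneg.mpr (sub_nonneg.mpr hden.le)) (sum_nonneg fun j hj => ?_)
      have hj : j ≤ m := Nat.lt_succ_iff.mp (mem_range.mp hj)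
      refine mul_nonneg (mul_nonneg (div_nonneg (prod_nonneg fun i hi => ?_) (by positivity))
        (by positivity)) (ih _ (by omega))
      have hi : (i : ℝ) ≤ m := by exact_mod_cast (Nat.lt_succ_iff.mp (mem_range.mp hi)).trans hj
      linarith

/-- For b > 1, σ > 0, k ∈ ℤ and s = σ + 2πik/log b, for every m ≥ 0 there is equality
|c*_{m,b}(s)| = (|(s+1)_m|/(σ+1)_m) · c*_{m,b}(σ). -/
theorem cstar_abs_eq_on_special_line (b : ℕ) (hb : 1 < b) (σ : ℝ) (hσ : 0 < σ) (k : ℤ)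
    (s : ℂ) (hs : s = (σ : ℂ) + 2 * Real.pi * Complex.I * (k : ℂ) / (Real.log b : ℂ)) (m : ℕ) :
    ‖cstarC b s m‖ =
      (‖∏ i ∈ Finset.range m, (s + 1 + (i : ℂ))‖ / ∏ i ∈ Finset.range m, (σ + 1 + (i : ℝ))) *
        cstarR b σ m := by
  have hlog : Complex.log b ≠ 0 := by
    rw [← Complex.natCast_log]
    exact_mod_cast (Real.log_pos (by exact_mod_cast hb)).ne'
  have hpow (n : ℕ) : (b : ℂ) ^ (s + n + 1) = (b : ℂ) ^ ((σ : ℂ) + n + 1) := by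
    rw [← Complex.cpow_add_two_pi_I_mul_div_log hlog ((σ : ℂ) + n + 1) k, hs, Complex.natCast_log]
    ring_nf
  have hP : 0 < ∏ i ∈ range m, (σ + 1 + (i : ℝ)) := prod_pos fun i _ => by positivity
  have key := congrArg norm (cstarC_mul_prod_eq b hpow m)
  rw [cstarC_ofReal, show ∏ i ∈ range m, ((σ : ℂ) + 1 + i) = ((∏ i ∈ range m, (σ + 1 + i) : ℝ) : ℂ)
    by push_cast; rfl] at key
  simp only [norm_mul, Complex.norm_real, Real.norm_eq_abs, abs_of_pos hP,
    abs_of_nonneg (cstarR_nonneg hb hσ m)] at key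
  rw [div_mul_eq_mul_div, eq_div_iff hP.ne', key]
end

section
/- Let b > 1 be an integer, σ > 0 a real number, and m ≥ 0 an integer. Then 0 < c*_{m,b}(σ) ≤ ∏_{j=1}^{m} (b^{σ+j} − b + γ_{σ+j,b})/(b^{σ+j} − b). -/
open Finset

/-- γ_{x,b} = ∑_{a=1}^{b-1} a^x for a real exponent x. -/
noncomputable def gammaReal (b : ℕ) (x : ℝ) : ℝ := ∑ a ∈ Finset.Ico 1 b, (a : ℝ) ^ x

noncomputable def binomC (s : ℝ) (j : ℕ) : ℝ :=
  (∏ i ∈ Finset.range j, (s - (i:ℝ))) / (Nat.factorial j : ℝ)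

lemma binomC_zero (s : ℝ) : binomC s 0 = 1 := by simp [binomC]

lemma binomC_succ_mul (s : ℝ) (k : ℕ) :
    ((k:ℝ)+1) * binomC s (k+1) = s * binomC (s-1) k := by
  have h : ∏ i ∈ Finset.range (k+1), (s - (i:ℝ))
      = (∏ i ∈ Finset.range k, (s - 1 - (i:ℝ))) * s := by
    rw [Finset.prod_range_succ']
    push_cast
    congr 1
    · exact Finset.prod_congr rfl fun i _ => by ring
    · norm_num
  rw [binomC, binomC, h, Nat.factorial_succ]
  have hk : (Nat.factorial k : ℝ) ≠ 0 := by positivity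
  push_cast
  field_simp

lemma partial_binom_le : ∀ (m : ℕ) (s : ℝ), (m:ℝ) ≤ s → ∀ a : ℝ, 0 ≤ a →
    ∑ j ∈ Finset.range (m+1), binomC s j * a^j ≤ (1+a)^s := by
  intro m
  induction m with
  | zero =>
    intro s hs a ha
    simpa [binomC] using Real.one_le_rpow (by linarith) (by exact_mod_cast hs)
  | succ m ih =>
    intro s hs a ha
    have hs0 : (0:ℝ) ≤ s := by
      have h' : ((m:ℝ)+1) ≤ s := by exact_mod_cast hs
      have : (0:ℝ) ≤ (m:ℝ) := Nat.cast_nonneg m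
      linarith
    set g : ℝ → ℝ := fun x => (1+x)^s - ∑ j ∈ Finset.range (m+2), binomC s j * x^j with hg
    have hderiv : ∀ x : ℝ, 0 ≤ x → HasDerivAt g
        (s * ((1+x)^(s-1) - ∑ j ∈ Finset.range (m+1), binomC (s-1) j * x^j)) x := by
      intro x hx
      have h1x : (1:ℝ) + x ≠ 0 := by positivity
      have h1 : HasDerivAt (fun x : ℝ => (1+x)^s) (1 * s * (1+x)^(s-1)) x :=
        HasDerivAt.rpow_const ((hasDerivAt_id x).const_add 1) (Or.inl h1x)
      have h2 : HasDerivAt (fun x : ℝ => ∑ j ∈ Finset.range (m+2), binomC s j * x^j)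
          (∑ j ∈ Finset.range (m+2), binomC s j * ((j:ℝ) * x^(j-1))) x :=
        HasDerivAt.fun_sum fun j _ => (hasDerivAt_pow j x).const_mul _
      have hsum : ∑ j ∈ Finset.range (m+2), binomC s j * ((j:ℝ) * x^(j-1))
          = s * ∑ j ∈ Finset.range (m+1), binomC (s-1) j * x^j := by
        rw [Finset.sum_range_succ' (fun j => binomC s j * ((j:ℝ) * x^(j-1))) (m+1)]
        simp only [Nat.cast_zero, zero_mul, mul_zero, add_zero]
        rw [Finset.mul_sum]
        refine Finset.sum_congr rfl fun k _ => ?_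
        have hk : k + 1 - 1 = k := rfl
        rw [hk]
        push_cast
        rw [show binomC s (k+1) * (((k:ℝ)+1) * x^k) = (((k:ℝ)+1) * binomC s (k+1)) * x^k by ring,
          binomC_succ_mul]
        ring
      have := h1.fun_sub h2
      rw [hsum] at this
      exact this.congr_deriv (by ring)
    have hcont : ContinuousOn g (Set.Ici 0) := by
      intro x hx
      exact ((hderiv x hx).continuousAt).continuousWithinAt
    have hmono : MonotoneOn g (Set.Ici (0:ℝ)) := by
      apply monotoneOn_of_deriv_nonneg (convex_Ici 0) hcont
      · intro x hx
        rw [interior_Ici] at hx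
        exact (hderiv x (le_of_lt hx)).differentiableAt.differentiableWithinAt
      · intro x hx
        rw [interior_Ici] at hx
        rw [(hderiv x (le_of_lt hx)).deriv]
        have h := ih (s-1) (by exact_mod_cast (by linarith [show ((m:ℝ)+1) ≤ s from by exact_mod_cast hs] : (m:ℝ) ≤ s - 1)) x (le_of_lt hx)
        have : 0 ≤ (1+x)^(s-1) - ∑ j ∈ Finset.range (m+1), binomC (s-1) j * x^j := by linarith
        positivity
    have h0 : g 0 = 0 := by
      simp only [hg]
      rw [Finset.sum_eq_single 0]
      · simp [binomC]
      · intro j _ hj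
        rcases Nat.exists_eq_succ_of_ne_zero hj with ⟨k, rfl⟩
        simp
      · simp
    have := hmono (Set.self_mem_Ici) (Set.mem_Ici.mpr ha) ha
    rw [h0] at this
    simpa [hg, sub_nonneg] using this


lemma binomC_zero' (s : ℝ) : binomC s 0 = 1 := by simp [binomC]

lemma sum_shift_rpow (b : ℕ) (hb : 1 ≤ b) (S : ℝ) :
    ∑ a ∈ Finset.Ico 1 b, ((a:ℝ)+1)^S = gammaReal b S + (b:ℝ)^S - 1 := by
  induction b, hb using Nat.le_induction with
  | base => simp [gammaReal]
  | succ b hb ihb =>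
    rw [Finset.sum_Ico_succ_top hb, ihb]
    have : gammaReal (b+1) S = gammaReal b S + (b:ℝ)^S := by
      rw [gammaReal, gammaReal, Finset.sum_Ico_succ_top hb]
    rw [this]
    push_cast
    ring

lemma key_sum_le (b : ℕ) (hb : 1 < b) (m : ℕ) (S : ℝ) (hS : ((m:ℝ)+1) ≤ S) :
    ∑ j ∈ Finset.range (m+1), binomC S (j+1) * (gammaNat b (j+1) : ℝ)
      ≤ (b:ℝ)^S - (b:ℝ) + gammaReal b S := by
  have hswap : ∑ j ∈ Finset.range (m+1), binomC S (j+1) * (gammaNat b (j+1) : ℝ)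
      = ∑ a ∈ Finset.Ico 1 b, ∑ j ∈ Finset.range (m+1), binomC S (j+1) * (a:ℝ)^(j+1) := by
    rw [Finset.sum_comm]
    refine Finset.sum_congr rfl fun j _ => ?_
    rw [gammaNat, ← Finset.mul_sum]
    push_cast
    ring
  rw [hswap]
  have hbound : ∀ a ∈ Finset.Ico 1 b,
      ∑ j ∈ Finset.range (m+1), binomC S (j+1) * (a:ℝ)^(j+1) ≤ ((a:ℝ)+1)^S - 1 := by
    intro a _
    have h1 : ∑ j ∈ Finset.range (m+2), binomC S j * (a:ℝ)^j
        = (∑ j ∈ Finset.range (m+1), binomC S (j+1) * (a:ℝ)^(j+1)) + 1 := by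
      rw [Finset.sum_range_succ' (fun j => binomC S j * (a:ℝ)^j) (m+1)]
      simp [binomC_zero']
    have h2 := partial_binom_le (m+1) S (by push_cast; linarith) (a:ℝ) (by positivity)
    rw [show ((m:ℕ)+1+1) = m+2 from rfl] at h2
    have : (1 + (a:ℝ))^S = ((a:ℝ)+1)^S := by ring_nf
    rw [this, h1] at h2
    linarith
  calc ∑ a ∈ Finset.Ico 1 b, ∑ j ∈ Finset.range (m+1), binomC S (j+1) * (a:ℝ)^(j+1)
      ≤ ∑ a ∈ Finset.Ico 1 b, (((a:ℝ)+1)^S - 1) := Finset.sum_le_sum hbound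
    _ = (b:ℝ)^S - (b:ℝ) + gammaReal b S := by
        rw [Finset.sum_sub_distrib, sum_shift_rpow b (le_of_lt hb) S]
        simp only [Finset.sum_const, Nat.card_Ico, nsmul_eq_mul, mul_one]
        have : ((b - 1 : ℕ) : ℝ) = (b:ℝ) - 1 := by
          have : 1 ≤ b := le_of_lt hb
          push_cast [this]
          ring
        rw [this]
        ring


theorem cstar_main (b : ℕ) (hb : 1 < b) (σ : ℝ) (hσ : 0 < σ) (m : ℕ) :
    0 < cstarR b σ m ∧
      cstarR b σ m ≤ ∏ j ∈ Finset.Icc 1 m,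
        (((b : ℝ) ^ (σ + (j : ℝ)) - (b : ℝ) + gammaReal b (σ + (j : ℝ))) /
          ((b : ℝ) ^ (σ + (j : ℝ)) - (b : ℝ))) := by
  have hb1 : (1:ℝ) < (b:ℝ) := by exact_mod_cast hb
  set fac : ℕ → ℝ := fun j =>
    (((b : ℝ) ^ (σ + (j : ℝ)) - (b : ℝ) + gammaReal b (σ + (j : ℝ))) /
      ((b : ℝ) ^ (σ + (j : ℝ)) - (b : ℝ))) with hfac
  set Q : ℕ → ℝ := fun n => ∏ j ∈ Finset.Icc 1 n, fac j with hQ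
  have hdenom : ∀ j : ℕ, 1 ≤ j → 0 < (b:ℝ) ^ (σ + (j:ℝ)) - (b:ℝ) := by
    intro j hj
    have hj1 : (1:ℝ) ≤ (j:ℝ) := by exact_mod_cast hj
    have : (b:ℝ) ^ (1:ℝ) < (b:ℝ) ^ (σ + (j:ℝ)) :=
      Real.rpow_lt_rpow_left_iff hb1 |>.mpr (by linarith)
    rw [Real.rpow_one] at this
    linarith
  have hgamma : ∀ x : ℝ, 0 ≤ gammaReal b x := by
    intro x
    exact Finset.sum_nonneg fun a _ => Real.rpow_nonneg (Nat.cast_nonneg a) x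
  have hfac1 : ∀ j : ℕ, 1 ≤ j → 1 ≤ fac j := by
    intro j hj
    rw [hfac]
    rw [le_div_iff₀ (hdenom j hj)]
    have := hgamma (σ + (j:ℝ))
    linarith
  have hQpos : ∀ n, 0 < Q n := by
    intro n
    exact Finset.prod_pos fun j hj => lt_of_lt_of_le one_pos (hfac1 j (Finset.mem_Icc.mp hj).1)
  have hQmono : ∀ n k : ℕ, n ≤ k → Q n ≤ Q k := by
    intro n k hnk
    have hsub : Finset.Icc 1 n ⊆ Finset.Icc 1 k :=
      Finset.Icc_subset_Icc le_rfl hnk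
    rw [hQ]
    simp only
    rw [← Finset.prod_sdiff hsub]
    have hrest : 1 ≤ ∏ j ∈ Finset.Icc 1 k \ Finset.Icc 1 n, fac j := by
      calc (1:ℝ) = ∏ _j ∈ Finset.Icc 1 k \ Finset.Icc 1 n, (1:ℝ) := by simp
        _ ≤ _ := Finset.prod_le_prod (fun _ _ => zero_le_one)
            (fun j hj => hfac1 j (Finset.mem_Icc.mp (Finset.mem_sdiff.mp hj).1).1)
    nlinarith [hQpos n, hQpos n]
  have hgammaNat1 : ∀ k : ℕ, 1 ≤ k → (1:ℝ) ≤ (gammaNat b k : ℝ) := by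
    intro k _
    have h1 : 1 ∈ Finset.Ico 1 b := Finset.mem_Ico.mpr ⟨le_rfl, hb⟩
    have : 1 ≤ gammaNat b k := by
      rw [gammaNat]
      calc 1 = 1 ^ k := (one_pow k).symm
        _ ≤ ∑ a ∈ Finset.Ico 1 b, a ^ k :=
          Finset.single_le_sum (fun a _ => Nat.zero_le _) h1
    exact_mod_cast this
  -- strong induction
  induction m using Nat.strong_induction_on with
  | _ m ih =>
    obtain _ | m := m
    · constructor
      · rw [cstarR]; exact one_pos
      · rw [cstarR]; simp [hQ]
    · set s : ℝ := σ + (m:ℝ) + 1 with hs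
      have hsm : ((m:ℝ)+1) ≤ s := by rw [hs]; linarith
      have hden : 0 < (b:ℝ) ^ s - (b:ℝ) := by
        have := hdenom (m+1) (Nat.le_add_left 1 m)
        rw [show σ + ((m+1:ℕ):ℝ) = s by push_cast [hs]; ring] at this
        exact this
      have hterm : ∀ j ∈ Finset.range (m+1),
          ((∏ i ∈ Finset.range (j + 1), (σ + (m : ℝ) + 1 - (i : ℝ))) / (Nat.factorial (j + 1) : ℝ))
            = binomC s (j+1) := by
        intro j _
        rw [binomC, hs]
      have hbinom_pos : ∀ j ∈ Finset.range (m+1), 0 < binomC s (j+1) := by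
        intro j hj
        rw [binomC]
        apply div_pos
        · apply Finset.prod_pos
          intro i hi
          have hi' : (i:ℝ) ≤ (j:ℝ) := by
            exact_mod_cast Nat.lt_succ_iff.mp (Finset.mem_range.mp hi)
          have hj' : (j:ℝ) ≤ (m:ℝ) := by
            exact_mod_cast Nat.lt_succ_iff.mp (Finset.mem_range.mp hj)
          rw [hs]; linarith
        · exact_mod_cast Nat.factorial_pos (j+1)
      have hrec : cstarR b σ (m+1) =
          (1 / ((b:ℝ) ^ s - (b:ℝ))) *
            ∑ j ∈ Finset.range (m+1), binomC s (j+1) * (gammaNat b (j+1) : ℝ) * cstarR b σ (m-j) := by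
        rw [cstarR]
        congr 1
      have hcpos : ∀ j ∈ Finset.range (m+1), 0 < cstarR b σ (m - j) := by
        intro j _
        exact (ih (m-j) (Nat.lt_succ_of_le (Nat.sub_le m j))).1
      constructor
      · rw [hrec]
        apply mul_pos (by positivity)
        apply Finset.sum_pos _ (Finset.nonempty_range_add_one)
        intro j hj
        exact mul_pos (mul_pos (hbinom_pos j hj)
          (lt_of_lt_of_le one_pos (hgammaNat1 (j+1) (Nat.le_add_left 1 j)))) (hcpos j hj)
      · have hsum_le : ∑ j ∈ Finset.range (m+1), binomC s (j+1) * (gammaNat b (j+1) : ℝ) * cstarR b σ (m-j)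
            ≤ ((b:ℝ)^s - (b:ℝ) + gammaReal b s) * Q m := by
          calc ∑ j ∈ Finset.range (m+1), binomC s (j+1) * (gammaNat b (j+1) : ℝ) * cstarR b σ (m-j)
              ≤ ∑ j ∈ Finset.range (m+1), binomC s (j+1) * (gammaNat b (j+1) : ℝ) * Q m := by
                refine Finset.sum_le_sum fun j hj => ?_
                have h1 : cstarR b σ (m-j) ≤ Q (m-j) :=
                  (ih (m-j) (Nat.lt_succ_of_le (Nat.sub_le m j))).2
                have h2 : Q (m-j) ≤ Q m := hQmono _ _ (Nat.sub_le m j)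
                have h3 : 0 ≤ binomC s (j+1) * (gammaNat b (j+1) : ℝ) :=
                  le_of_lt (mul_pos (hbinom_pos j hj)
                    (lt_of_lt_of_le one_pos (hgammaNat1 (j+1) (Nat.le_add_left 1 j))))
                exact mul_le_mul_of_nonneg_left (le_trans h1 h2) h3
            _ = (∑ j ∈ Finset.range (m+1), binomC s (j+1) * (gammaNat b (j+1) : ℝ)) * Q m := by
                rw [Finset.sum_mul]
            _ ≤ ((b:ℝ)^s - (b:ℝ) + gammaReal b s) * Q m := by
                apply mul_le_mul_of_nonneg_right (key_sum_le b hb m s hsm) (le_of_lt (hQpos m))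
        have hQsucc : Q (m+1) = Q m * fac (m+1) := by
          rw [hQ]
          simp only
          rw [Finset.prod_Icc_succ_top (Nat.le_add_left 1 m)]
        have hfacval : fac (m+1) = ((b:ℝ)^s - (b:ℝ) + gammaReal b s) / ((b:ℝ)^s - (b:ℝ)) := by
          rw [hfac]
          simp only
          rw [show σ + ((m+1:ℕ):ℝ) = s by push_cast [hs]; ring]
        calc cstarR b σ (m+1)
            ≤ (1 / ((b:ℝ)^s - (b:ℝ))) * (((b:ℝ)^s - (b:ℝ) + gammaReal b s) * Q m) := by
              rw [hrec]
              exact mul_le_mul_of_nonneg_left hsum_le (by positivity)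
          _ = Q (m+1) := by
              rw [hQsucc, hfacval]
              field_simp


/-- Proposition 1: 0 < c*_{m,b}(σ) ≤ ∏_{j=1}^{m} (b^{σ+j} − b + γ_{σ+j,b})/(b^{σ+j} − b). -/
theorem cstar_pos_and_le_finite_product (b : ℕ) (hb : 1 < b) (σ : ℝ) (hσ : 0 < σ) (m : ℕ) :
    0 < cstarR b σ m ∧
      cstarR b σ m ≤ ∏ j ∈ Finset.Icc 1 m,
        (((b : ℝ) ^ (σ + (j : ℝ)) - (b : ℝ) + gammaReal b (σ + (j : ℝ))) /
          ((b : ℝ) ^ (σ + (j : ℝ)) - (b : ℝ))) := by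
  exact cstar_main b hb σ hσ m
end

section
/- Let b > 1 be an integer and σ > 0 a real number. Then the infinite product P_b(σ) = ∏_{j=1}^{∞} (b^{σ+j} − b + γ_{σ+j,b})/(b^{σ+j} − b) converges to a finite value, and for every integer m ≥ 0 one has c*_{m,b}(σ) ≤ P_b(σ). -/
open Finset

/- ### Auxiliary material -/

noncomputable def binomR (x : ℝ) (j : ℕ) : ℝ :=
  (∏ i ∈ Finset.range j, (x - (i : ℝ))) / (Nat.factorial j : ℝ)

noncomputable def Spoly (n : ℕ) (x a : ℝ) : ℝ :=
  ∑ j ∈ Finset.range (n + 1), binomR x j * a ^ j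

lemma binomR_succ_mul (x : ℝ) (j : ℕ) :
    ((j : ℝ) + 1) * binomR x (j + 1) = x * binomR (x - 1) j := by
  unfold binomR
  rw [Finset.prod_range_succ']
  have h : (∏ i ∈ Finset.range j, (x - ((i : ℕ) + 1 : ℕ))) = ∏ i ∈ Finset.range j, (x - 1 - i) := by
    apply Finset.prod_congr rfl
    intro i _
    push_cast
    ring
  rw [h, Nat.factorial_succ]
  have hj : (Nat.factorial j : ℝ) ≠ 0 := Nat.cast_ne_zero.mpr (Nat.factorial_ne_zero j)
  have hj1 : ((j : ℝ) + 1) ≠ 0 := by positivity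
  push_cast
  field_simp
  ring

lemma binomR_nonneg {x : ℝ} {j : ℕ} (h : (j : ℝ) ≤ x + 1) : 0 ≤ binomR x j := by
  apply div_nonneg _ (by positivity)
  apply Finset.prod_nonneg
  intro i hi
  simp only [Finset.mem_range] at hi
  have : (i : ℝ) + 1 ≤ (j : ℝ) := by exact_mod_cast hi
  linarith

lemma hasDerivAt_Spoly (n : ℕ) (x a : ℝ) :
    HasDerivAt (fun t => Spoly (n + 1) x t) (x * Spoly n (x - 1) a) a := by
  have h : HasDerivAt (fun t => Spoly (n + 1) x t)
      (∑ j ∈ Finset.range (n + 2), binomR x j * ((j : ℝ) * a ^ (j - 1))) a := by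
    apply HasDerivAt.fun_sum
    intro j _
    exact (hasDerivAt_pow j a).const_mul (binomR x j)
  convert h using 1
  rw [Finset.sum_range_succ']
  simp only [Nat.cast_zero, zero_mul, mul_zero, add_zero]
  rw [Spoly, Finset.mul_sum]
  apply Finset.sum_congr rfl
  intro j _
  push_cast
  calc x * (binomR (x - 1) j * a ^ j) = (binomR x (j + 1) * ((j : ℝ) + 1)) * a ^ j := by
        rw [mul_comm (binomR x (j + 1)) _, binomR_succ_mul]; ring
    _ = binomR x (j + 1) * (((j : ℝ) + 1) * a ^ (j + 1 - 1)) := by simp; ring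

lemma Spoly_zero_right (n : ℕ) (x : ℝ) : Spoly n x 0 = 1 := by
  rw [Spoly, Finset.sum_range_succ']
  simp [binomR]

lemma spoly_le : ∀ (n : ℕ) (x : ℝ), (n : ℝ) ≤ x → ∀ a : ℝ, 0 ≤ a → Spoly n x a ≤ (1 + a) ^ x := by
  intro n
  induction n with
  | zero =>
      intro x hx a ha
      have h1 : Spoly 0 x a = 1 := by simp [Spoly, binomR]
      rw [h1]
      exact Real.one_le_rpow (by linarith) (by exact_mod_cast hx)
  | succ n ih =>
      intro x hx a ha
      set g : ℝ → ℝ := fun t => (1 + t) ^ x - Spoly (n + 1) x t with hg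
      have hx0 : (0 : ℝ) < x := lt_of_lt_of_le (by positivity) hx
      have hd : ∀ t : ℝ, 0 ≤ t →
          HasDerivAt g (x * ((1 + t) ^ (x - 1) - Spoly n (x - 1) t)) t := by
        intro t ht
        have h1 : HasDerivAt (fun t : ℝ => (1 + t) ^ x) (x * (1 + t) ^ (x - 1)) t := by
          have hb : HasDerivAt (fun t : ℝ => 1 + t) 1 t := (hasDerivAt_id t).const_add 1
          have h2 := (Real.hasDerivAt_rpow_const (x := 1 + t) (p := x)
            (Or.inl (by linarith))).comp t hb
          rw [mul_one] at h2
          exact h2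
        have := h1.sub (hasDerivAt_Spoly n x t)
        rw [mul_sub]
        exact this
      have hmono : MonotoneOn g (Set.Ici (0 : ℝ)) := by
        apply monotoneOn_of_deriv_nonneg (convex_Ici 0)
        · intro t ht
          exact (hd t ht).continuousAt.continuousWithinAt
        · intro t ht
          rw [interior_Ici] at ht
          exact ((hd t (le_of_lt ht)).differentiableAt).differentiableWithinAt
        · intro t ht
          rw [interior_Ici] at ht
          rw [(hd t (le_of_lt ht)).deriv]
          have hih : Spoly n (x - 1) t ≤ (1 + t) ^ (x - 1) := by
            apply ih (x - 1) (by push_cast at hx ⊢; linarith) t (le_of_lt ht)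
          have := le_of_lt (Set.mem_Ioi.mp ht)
          nlinarith
      have h0 : g 0 = 0 := by
        simp only [hg, Spoly_zero_right]
        norm_num
      have := hmono (Set.self_mem_Ici) (Set.mem_Ici.mpr ha) ha
      rw [h0] at this
      simpa [hg, sub_nonneg] using this

lemma sum_binom_gamma_le (b : ℕ) (hb : 1 < b) (n : ℕ) (x : ℝ) (hx : (n : ℝ) ≤ x) :
    ∑ j ∈ Finset.range n, binomR x (j + 1) * (gammaNat b (j + 1) : ℝ)
      ≤ (b : ℝ) ^ x - (b : ℝ) + gammaReal b x := by
  have hx0 : (0 : ℝ) ≤ x := le_trans (by positivity) hx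
  have h1 : ∑ j ∈ Finset.range n, binomR x (j + 1) * (gammaNat b (j + 1) : ℝ)
      = ∑ a ∈ Finset.Ico 1 b, (Spoly n x (a : ℝ) - 1) := by
    have : ∀ a : ℕ, Spoly n x (a : ℝ) - 1
        = ∑ j ∈ Finset.range n, binomR x (j + 1) * (a : ℝ) ^ (j + 1) := by
      intro a
      rw [Spoly, Finset.sum_range_succ']
      simp [binomR]
    simp only [this]
    rw [Finset.sum_comm]
    apply Finset.sum_congr rfl
    intro j _
    rw [gammaNat, ← Finset.mul_sum]
    push_cast
    ring
  rw [h1]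
  have h2 : ∑ a ∈ Finset.Ico 1 b, (Spoly n x (a : ℝ) - 1)
      ≤ ∑ a ∈ Finset.Ico 1 b, ((1 + (a : ℝ)) ^ x - 1) := by
    apply Finset.sum_le_sum
    intro a _
    have := spoly_le n x hx (a : ℝ) (by positivity)
    linarith
  refine le_trans h2 ?_
  have h3 : ∑ a ∈ Finset.Ico 1 b, ((1 + (a : ℝ)) ^ x - (a : ℝ) ^ x) = (b : ℝ) ^ x - 1 := by
    rw [Finset.sum_Ico_eq_sum_range]
    have : ∀ i : ℕ, (1 + ((1 + i : ℕ) : ℝ)) ^ x - ((1 + i : ℕ) : ℝ) ^ x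
        = (fun k : ℕ => (((k + 1 : ℕ)) : ℝ) ^ x) (i + 1) - (fun k : ℕ => (((k + 1 : ℕ)) : ℝ) ^ x) i := by
      intro i
      simp only []
      congr 2
      · push_cast; ring
      · push_cast; ring
    rw [Finset.sum_congr rfl fun i _ => this i,
      Finset.sum_range_sub (fun k : ℕ => (((k + 1 : ℕ)) : ℝ) ^ x)]
    have hb1 : b - 1 + 1 = b := by omega
    rw [hb1]
    norm_num
  have h4 : ∑ a ∈ Finset.Ico 1 b, ((1 + (a : ℝ)) ^ x - 1)
      = ((b : ℝ) ^ x - 1) + gammaReal b x - ((b : ℝ) - 1) := by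
    have e1 : ∀ a : ℕ, (1 + (a : ℝ)) ^ x - 1
        = ((1 + (a : ℝ)) ^ x - (a : ℝ) ^ x) + ((a : ℝ) ^ x - 1) := by intro a; ring
    rw [Finset.sum_congr rfl (fun a _ => e1 a), Finset.sum_add_distrib, h3,
      Finset.sum_sub_distrib]
    rw [Finset.sum_const, Nat.card_Ico, nsmul_eq_mul, mul_one]
    have hbc : ((b - 1 : ℕ) : ℝ) = (b : ℝ) - 1 := by
      have h1b : (1 : ℕ) ≤ b := le_of_lt hb
      push_cast [h1b]
      ring
    rw [hbc, gammaReal]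
    ring
  rw [h4]
  linarith

lemma gammaReal_nonneg (b : ℕ) (x : ℝ) : 0 ≤ gammaReal b x := by
  apply Finset.sum_nonneg
  intro a _
  positivity

lemma D_pos (b : ℕ) (hb : 1 < b) (σ : ℝ) (hσ : 0 < σ) : ∀ j : ℕ, 1 ≤ j → 0 < (b : ℝ) ^ (σ + (j : ℝ)) - (b : ℝ) := by
  intro j hj
  have hb1 : (1 : ℝ) < (b : ℝ) := by exact_mod_cast hb
  have h1 : (b : ℝ) = (b : ℝ) ^ (1 : ℝ) := (Real.rpow_one _).symm
  have h2 : (b : ℝ) ^ (1 : ℝ) < (b : ℝ) ^ (σ + (j : ℝ)) := by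
    rw [Real.rpow_lt_rpow_left_iff hb1]
    have : (1 : ℝ) ≤ (j : ℝ) := by exact_mod_cast hj
    linarith
  rw [Real.rpow_one] at h2
  linarith

lemma Q_mono (b : ℕ) (hb : 1 < b) (σ : ℝ) (hσ : 0 < σ) :
    Monotone (fun m : ℕ => ∏ j ∈ Finset.Icc 1 m,
      (((b : ℝ) ^ (σ + (j : ℝ)) - (b : ℝ) + gammaReal b (σ + (j : ℝ))) /
        ((b : ℝ) ^ (σ + (j : ℝ)) - (b : ℝ)))) := by
  have hF1 : ∀ j : ℕ, 1 ≤ j → (1 : ℝ) ≤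
      ((b : ℝ) ^ (σ + (j : ℝ)) - (b : ℝ) + gammaReal b (σ + (j : ℝ))) /
        ((b : ℝ) ^ (σ + (j : ℝ)) - (b : ℝ)) := by
    intro j hj
    have hD := D_pos b hb σ hσ j hj
    rw [le_div_iff₀ hD, one_mul]
    linarith [gammaReal_nonneg b (σ + (j : ℝ))]
  apply monotone_nat_of_le_succ
  intro m
  rw [Finset.prod_Icc_succ_top (Nat.succ_le_succ (Nat.zero_le m))]
  have hQnn : (0 : ℝ) ≤ ∏ j ∈ Finset.Icc 1 m,
      (((b : ℝ) ^ (σ + (j : ℝ)) - (b : ℝ) + gammaReal b (σ + (j : ℝ))) /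
        ((b : ℝ) ^ (σ + (j : ℝ)) - (b : ℝ))) := by
    apply Finset.prod_nonneg
    intro j hj
    have hj1 : 1 ≤ j := (Finset.mem_Icc.mp hj).1
    linarith [hF1 j hj1]
  exact le_mul_of_one_le_right hQnn (hF1 (m + 1) (Nat.succ_le_succ (Nat.zero_le m)))

lemma Q_bdd (b : ℕ) (hb : 1 < b) (σ : ℝ) (hσ : 0 < σ) : ∃ C : ℝ, ∀ m : ℕ, (∏ j ∈ Finset.Icc 1 m,
      (((b : ℝ) ^ (σ + (j : ℝ)) - (b : ℝ) + gammaReal b (σ + (j : ℝ))) /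
        ((b : ℝ) ^ (σ + (j : ℝ)) - (b : ℝ)))) ≤ C := by
  have hb1 : (1 : ℝ) < (b : ℝ) := by exact_mod_cast hb
  have hb0 : (0 : ℝ) < (b : ℝ) := by linarith
  set B1 : ℝ := (b : ℝ) - 1 with hB1
  have hB1pos : 0 < B1 := by rw [hB1]; linarith
  set r : ℝ := B1 / (b : ℝ) with hr
  have hr0 : 0 ≤ r := by positivity
  have hr1 : r < 1 := by
    rw [hr, div_lt_one hb0, hB1]
    linarith
  have hbσ : (0 : ℝ) < (b : ℝ) ^ σ - 1 := by
    have : (1 : ℝ) = (b : ℝ) ^ (0 : ℝ) := (Real.rpow_zero _).symm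
    have h2 : (b : ℝ) ^ (0 : ℝ) < (b : ℝ) ^ σ := by
      rw [Real.rpow_lt_rpow_left_iff hb1]; exact hσ
    rw [Real.rpow_zero] at h2
    linarith
  set K : ℝ := (B1 * B1 ^ σ) / ((b : ℝ) ^ σ - 1) with hK
  have hK0 : 0 ≤ K := by positivity
  -- bound each u_j
  have hu : ∀ j : ℕ, 1 ≤ j →
      gammaReal b (σ + (j : ℝ)) / ((b : ℝ) ^ (σ + (j : ℝ)) - (b : ℝ)) ≤ K * r ^ j := by
    intro j hj
    have hD := D_pos b hb σ hσ j hj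
    have hγ : gammaReal b (σ + (j : ℝ)) ≤ B1 * (B1 ^ σ * B1 ^ (j : ℕ)) := by
      have h1 : gammaReal b (σ + (j : ℝ)) ≤ (Finset.Ico 1 b).card • B1 ^ (σ + (j : ℝ)) := by
        rw [gammaReal]
        apply Finset.sum_le_card_nsmul
        intro a ha
        simp only [Finset.mem_Ico] at ha
        have ha1 : (a : ℝ) ≤ B1 := by
          rw [hB1]
          have : a ≤ b - 1 := by omega
          have := (Nat.cast_le (α := ℝ)).mpr this
          have hbc : ((b - 1 : ℕ) : ℝ) = (b : ℝ) - 1 := by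
            push_cast [le_of_lt hb]; ring
          linarith [hbc ▸ this]
        exact Real.rpow_le_rpow (by positivity) ha1 (by positivity)
      have h2 : B1 ^ (σ + (j : ℝ)) = B1 ^ σ * B1 ^ (j : ℕ) := by
        rw [Real.rpow_add hB1pos, Real.rpow_natCast]
      rw [Nat.card_Ico, nsmul_eq_mul] at h1
      have hbc : ((b - 1 : ℕ) : ℝ) = B1 := by
        rw [hB1]; push_cast [le_of_lt hb]; ring
      rw [hbc, h2] at h1
      linarith
    have hDl : (b : ℝ) ^ (j : ℕ) * ((b : ℝ) ^ σ - 1) ≤ (b : ℝ) ^ (σ + (j : ℝ)) - (b : ℝ) := by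
      have h1 : (b : ℝ) ^ (σ + (j : ℝ)) = (b : ℝ) ^ σ * (b : ℝ) ^ (j : ℕ) := by
        rw [Real.rpow_add hb0, Real.rpow_natCast]
      have h2 : (b : ℝ) ≤ (b : ℝ) ^ (j : ℕ) := by
        calc (b : ℝ) = (b : ℝ) ^ (1 : ℕ) := (pow_one _).symm
          _ ≤ (b : ℝ) ^ (j : ℕ) := pow_le_pow_right₀ (le_of_lt hb1) hj
      rw [h1]
      nlinarith
    have hDlpos : 0 < (b : ℝ) ^ (j : ℕ) * ((b : ℝ) ^ σ - 1) := by positivity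
    have step : gammaReal b (σ + (j : ℝ)) / ((b : ℝ) ^ (σ + (j : ℝ)) - (b : ℝ))
        ≤ (B1 * (B1 ^ σ * B1 ^ (j : ℕ))) / ((b : ℝ) ^ (j : ℕ) * ((b : ℝ) ^ σ - 1)) :=
      div_le_div₀ (by positivity) hγ hDlpos hDl
    refine le_trans step (le_of_eq ?_)
    rw [hK, hr, div_pow, div_mul_div_comm]
    congr 1
    · ring
    · ring
  -- finish with exp bound
  refine ⟨Real.exp (K * (1 - r)⁻¹), fun m => ?_⟩
  have hF : ∀ j ∈ Finset.Icc 1 m,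
      ((b : ℝ) ^ (σ + (j : ℝ)) - (b : ℝ) + gammaReal b (σ + (j : ℝ))) /
        ((b : ℝ) ^ (σ + (j : ℝ)) - (b : ℝ))
      ≤ Real.exp (gammaReal b (σ + (j : ℝ)) / ((b : ℝ) ^ (σ + (j : ℝ)) - (b : ℝ))) := by
    intro j hj
    have hj1 : 1 ≤ j := (Finset.mem_Icc.mp hj).1
    have hD := D_pos b hb σ hσ j hj1
    have : ((b : ℝ) ^ (σ + (j : ℝ)) - (b : ℝ) + gammaReal b (σ + (j : ℝ))) /
        ((b : ℝ) ^ (σ + (j : ℝ)) - (b : ℝ))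
        = 1 + gammaReal b (σ + (j : ℝ)) / ((b : ℝ) ^ (σ + (j : ℝ)) - (b : ℝ)) := by
      field_simp
    rw [this]
    have := Real.add_one_le_exp
      (gammaReal b (σ + (j : ℝ)) / ((b : ℝ) ^ (σ + (j : ℝ)) - (b : ℝ)))
    linarith
  have h5 : (∏ j ∈ Finset.Icc 1 m,
      (((b : ℝ) ^ (σ + (j : ℝ)) - (b : ℝ) + gammaReal b (σ + (j : ℝ))) /
        ((b : ℝ) ^ (σ + (j : ℝ)) - (b : ℝ))))
      ≤ ∏ j ∈ Finset.Icc 1 m, Real.exp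
        (gammaReal b (σ + (j : ℝ)) / ((b : ℝ) ^ (σ + (j : ℝ)) - (b : ℝ))) := by
    apply Finset.prod_le_prod
    · intro j hj
      have hj1 : 1 ≤ j := (Finset.mem_Icc.mp hj).1
      have hD := D_pos b hb σ hσ j hj1
      have hg := gammaReal_nonneg b (σ + (j : ℝ))
      apply div_nonneg <;> linarith
    · exact hF
  rw [← Real.exp_sum] at h5
  refine le_trans h5 (Real.exp_le_exp.mpr ?_)
  have h6 : ∑ j ∈ Finset.Icc 1 m,
      gammaReal b (σ + (j : ℝ)) / ((b : ℝ) ^ (σ + (j : ℝ)) - (b : ℝ))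
      ≤ ∑ j ∈ Finset.Icc 1 m, K * r ^ j := by
    apply Finset.sum_le_sum
    intro j hj
    exact hu j (Finset.mem_Icc.mp hj).1
  refine le_trans h6 ?_
  rw [← Finset.mul_sum]
  have h7 : ∑ j ∈ Finset.Icc 1 m, r ^ j ≤ (1 - r)⁻¹ := by
    have hsub : Finset.Icc 1 m ⊆ Finset.range (m + 1) := by
      intro j hj
      simp only [Finset.mem_Icc] at hj
      simp only [Finset.mem_range]
      omega
    have h8 : ∑ j ∈ Finset.Icc 1 m, r ^ j ≤ ∑ j ∈ Finset.range (m + 1), r ^ j :=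
      Finset.sum_le_sum_of_subset_of_nonneg hsub (fun j _ _ => by positivity)
    refine le_trans h8 ?_
    have hne : r ≠ 1 := ne_of_lt hr1
    rw [geom_sum_eq hne]
    have h9 : (r ^ (m + 1) - 1) / (r - 1) = (1 - r ^ (m + 1)) * (1 - r)⁻¹ := by
      have : r - 1 ≠ 0 := by intro h; apply hne; linarith
      have h1r : (1 : ℝ) - r ≠ 0 := by intro h; apply hne; linarith
      field_simp
      ring
    rw [h9]
    have hpow : 0 ≤ r ^ (m + 1) := by positivity
    have : (1 : ℝ) - r ^ (m + 1) ≤ 1 := by linarith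
    calc (1 - r ^ (m + 1)) * (1 - r)⁻¹ ≤ 1 * (1 - r)⁻¹ := by
          apply mul_le_mul_of_nonneg_right this
          have : 0 < 1 - r := by linarith
          positivity
      _ = (1 - r)⁻¹ := one_mul _
  exact mul_le_mul_of_nonneg_left h7 hK0

lemma cstar_le_Q (b : ℕ) (hb : 1 < b) (σ : ℝ) (hσ : 0 < σ) : ∀ m : ℕ, 0 ≤ cstarR b σ m ∧ cstarR b σ m ≤
    ∏ j ∈ Finset.Icc 1 m,
      (((b : ℝ) ^ (σ + (j : ℝ)) - (b : ℝ) + gammaReal b (σ + (j : ℝ))) /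
        ((b : ℝ) ^ (σ + (j : ℝ)) - (b : ℝ))) := by
  intro m
  induction m using Nat.strong_induction_on with
  | _ m ih =>
    match m with
    | 0 => simp [cstarR]
    | (m + 1) =>
      set x : ℝ := σ + (m : ℝ) + 1 with hx
      set D : ℝ := (b : ℝ) ^ x - (b : ℝ) with hD
      set Q : ℕ → ℝ := fun k => ∏ j ∈ Finset.Icc 1 k,
        (((b : ℝ) ^ (σ + (j : ℝ)) - (b : ℝ) + gammaReal b (σ + (j : ℝ))) /
          ((b : ℝ) ^ (σ + (j : ℝ)) - (b : ℝ))) with hQ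
      have hxe : σ + ((m + 1 : ℕ) : ℝ) = x := by rw [hx]; push_cast; ring
      have hDpos : 0 < D := by
        rw [hD, ← hxe]
        exact D_pos b hb σ hσ (m + 1) (Nat.succ_le_succ (Nat.zero_le m))
      have heq : cstarR b σ (m + 1) = (1 / D) *
          ∑ j ∈ Finset.range (m + 1),
            binomR x (j + 1) * (gammaNat b (j + 1) : ℝ) * cstarR b σ (m - j) := by
        rw [cstarR]
        simp only [binomR, hD, hx]
      have hQmono := Q_mono b hb σ hσ
      have hcoef : ∀ j ∈ Finset.range (m + 1),
          0 ≤ binomR x (j + 1) * (gammaNat b (j + 1) : ℝ) := by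
        intro j hj
        simp only [Finset.mem_range] at hj
        have h1 : ((j + 1 : ℕ) : ℝ) ≤ x + 1 := by
          rw [hx]; push_cast
          have : (j : ℝ) ≤ (m : ℝ) := by exact_mod_cast Nat.lt_succ_iff.mp hj
          linarith
        exact mul_nonneg (binomR_nonneg h1) (by positivity)
      constructor
      · rw [heq]
        apply mul_nonneg (by positivity)
        apply Finset.sum_nonneg
        intro j hj
        exact mul_nonneg (hcoef j hj)
          (ih (m - j) (Nat.lt_succ_of_le (Nat.sub_le m j))).1
      · rw [heq]
        have hstep : ∑ j ∈ Finset.range (m + 1),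
            binomR x (j + 1) * (gammaNat b (j + 1) : ℝ) * cstarR b σ (m - j)
            ≤ ∑ j ∈ Finset.range (m + 1),
              binomR x (j + 1) * (gammaNat b (j + 1) : ℝ) * Q m := by
          apply Finset.sum_le_sum
          intro j hj
          apply mul_le_mul_of_nonneg_left _ (hcoef j hj)
          exact le_trans (ih (m - j) (Nat.lt_succ_of_le (Nat.sub_le m j))).2
            (hQmono (Nat.sub_le m j))
        have hsum : ∑ j ∈ Finset.range (m + 1),
            binomR x (j + 1) * (gammaNat b (j + 1) : ℝ)
            ≤ D + gammaReal b x := by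
          have := sum_binom_gamma_le b hb (m + 1) x
            (by rw [hx]; push_cast; linarith)
          rw [hD]
          linarith
        have hQ0 : (1 : ℝ) ≤ Q 0 := by simp [hQ]
        have hQm0 : 0 ≤ Q m :=
          le_trans zero_le_one (le_trans hQ0 (hQmono (Nat.zero_le m)))
        have hQsucc : Q (m + 1) = Q m * ((D + gammaReal b x) / D) := by
          simp only [hQ]
          rw [Finset.prod_Icc_succ_top (Nat.succ_le_succ (Nat.zero_le m)), hxe, hD]
        calc (1 / D) * ∑ j ∈ Finset.range (m + 1),
              binomR x (j + 1) * (gammaNat b (j + 1) : ℝ) * cstarR b σ (m - j)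
            ≤ (1 / D) * ((D + gammaReal b x) * Q m) := by
              apply mul_le_mul_of_nonneg_left _ (by positivity)
              rw [← Finset.sum_mul] at hstep
              refine le_trans hstep ?_
              exact mul_le_mul_of_nonneg_right hsum hQm0
          _ = Q m * ((D + gammaReal b x) / D) := by field_simp
          _ = Q (m + 1) := hQsucc.symm

/-- The infinite product P_b(σ) = ∏_{j≥1} (b^{σ+j} − b + γ_{σ+j,b})/(b^{σ+j} − b) converges
to a finite value, and c*_{m,b}(σ) ≤ P_b(σ) for every m ≥ 0. -/
theorem cstar_le_Pb (b : ℕ) (hb : 1 < b) (σ : ℝ) (hσ : 0 < σ) :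
    ∃ P : ℝ, Filter.Tendsto (fun m : ℕ => ∏ j ∈ Finset.Icc 1 m,
        (((b : ℝ) ^ (σ + (j : ℝ)) - (b : ℝ) + gammaReal b (σ + (j : ℝ))) /
          ((b : ℝ) ^ (σ + (j : ℝ)) - (b : ℝ)))) Filter.atTop (nhds P) ∧
      ∀ m : ℕ, cstarR b σ m ≤ P := by
  set Q : ℕ → ℝ := fun m => ∏ j ∈ Finset.Icc 1 m,
      (((b : ℝ) ^ (σ + (j : ℝ)) - (b : ℝ) + gammaReal b (σ + (j : ℝ))) /
        ((b : ℝ) ^ (σ + (j : ℝ)) - (b : ℝ))) with hQ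
  obtain ⟨C, hC⟩ := Q_bdd b hb σ hσ
  have hbdd : BddAbove (Set.range Q) := by
    refine ⟨C, ?_⟩
    rintro _ ⟨m, rfl⟩
    exact hC m
  have hmono := Q_mono b hb σ hσ
  refine ⟨⨆ m, Q m, tendsto_atTop_ciSup hmono hbdd, fun m => ?_⟩
  exact le_trans (cstar_le_Q b hb σ hσ m).2 (le_ciSup hbdd m)
end

section
/- Let b > 1 be an integer. The function P_b(σ) = ∏_{j=1}^{∞} (1 + (∑_{0<a<b} (a/b)^{j+σ})/(1 − b^{1−j−σ})), defined for σ > 0, is a decreasing function of σ on (0, ∞). -/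
open Finset

private noncomputable def Fb (b : ℕ) (σ : ℝ) (j : ℕ) : ℝ :=
  1 + (∑ a ∈ Finset.Ico 1 b, ((a : ℝ) / (b : ℝ)) ^ ((j : ℝ) + 1 + σ)) /
    (1 - (b : ℝ) ^ (1 - ((j : ℝ) + 1) - σ))

private lemma den_pos {b : ℕ} (hb : 1 < b) {σ : ℝ} (hσ : 0 < σ) (j : ℕ) :
    0 < 1 - (b : ℝ) ^ (1 - ((j : ℝ) + 1) - σ) := by
  have hB : (1 : ℝ) < b := by exact_mod_cast hb
  have hj : (0 : ℝ) ≤ (j : ℝ) := Nat.cast_nonneg j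
  have : (b : ℝ) ^ (1 - ((j : ℝ) + 1) - σ) < 1 :=
    Real.rpow_lt_one_of_one_lt_of_neg hB (by linarith)
  linarith

private lemma num_nonneg {b : ℕ} (j : ℕ) (σ : ℝ) :
    0 ≤ ∑ a ∈ Finset.Ico 1 b, ((a : ℝ) / (b : ℝ)) ^ ((j : ℝ) + 1 + σ) := by
  apply Finset.sum_nonneg
  intro a _
  exact Real.rpow_nonneg (div_nonneg (Nat.cast_nonneg a) (Nat.cast_nonneg b)) _

private lemma one_le_Fb {b : ℕ} (hb : 1 < b) {σ : ℝ} (hσ : 0 < σ) (j : ℕ) :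
    1 ≤ Fb b σ j := by
  have h1 := den_pos hb hσ j
  have h2 := num_nonneg (b := b) j σ
  have := div_nonneg h2 h1.le
  unfold Fb; linarith

private lemma Fb_anti {b : ℕ} (hb : 1 < b) {σ τ : ℝ} (hσ : 0 < σ) (hστ : σ ≤ τ) (j : ℕ) :
    Fb b τ j ≤ Fb b σ j := by
  have hB : (1 : ℝ) < b := by exact_mod_cast hb
  unfold Fb
  have hnum : (∑ a ∈ Finset.Ico 1 b, ((a : ℝ) / (b : ℝ)) ^ ((j : ℝ) + 1 + τ)) ≤
      ∑ a ∈ Finset.Ico 1 b, ((a : ℝ) / (b : ℝ)) ^ ((j : ℝ) + 1 + σ) := by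
    apply Finset.sum_le_sum
    intro a ha
    rw [Finset.mem_Ico] at ha
    have ha1 : (1 : ℝ) ≤ (a : ℝ) := by exact_mod_cast ha.1
    have ha2 : (a : ℝ) < (b : ℝ) := by exact_mod_cast ha.2
    have hpos : 0 < (a : ℝ) / (b : ℝ) := div_pos (by linarith) (by linarith)
    have hle1 : (a : ℝ) / (b : ℝ) ≤ 1 := by
      rw [div_le_one (by linarith)]; linarith
    exact Real.rpow_le_rpow_of_exponent_ge hpos hle1 (by linarith)
  have hden : (b : ℝ) ^ (1 - ((j : ℝ) + 1) - τ) ≤ (b : ℝ) ^ (1 - ((j : ℝ) + 1) - σ) :=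
    Real.rpow_le_rpow_of_exponent_le hB.le (by linarith)
  have hd : 1 - (b : ℝ) ^ (1 - ((j : ℝ) + 1) - σ) ≤ 1 - (b : ℝ) ^ (1 - ((j : ℝ) + 1) - τ) := by
    linarith
  have := div_le_div₀ (num_nonneg (b := b) j σ) hnum (den_pos hb hσ j) hd
  linarith

private lemma summable_log_Fb {b : ℕ} (hb : 1 < b) {σ : ℝ} (hσ : 0 < σ) :
    Summable fun j => Real.log (Fb b σ j) := by
  have hB : (1 : ℝ) < b := by exact_mod_cast hb
  have hBpos : (0 : ℝ) < b := by linarith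
  set r : ℝ := ((b : ℝ) - 1) / (b : ℝ) with hr
  have hr0 : 0 ≤ r := div_nonneg (by linarith) hBpos.le
  have hr1 : r < 1 := by rw [hr, div_lt_one hBpos]; linarith
  set d0 : ℝ := 1 - (b : ℝ) ^ (-σ) with hd0
  have hd0pos : 0 < d0 := by
    have : (b : ℝ) ^ (-σ) < 1 := Real.rpow_lt_one_of_one_lt_of_neg hB (by linarith)
    rw [hd0]; linarith
  -- bound Fb - 1 ≤ (b / d0) * r ^ j
  have key : ∀ j : ℕ, Real.log (Fb b σ j) ≤ ((b : ℝ) / d0) * r ^ j := by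
    intro j
    have h1 := den_pos hb hσ j
    have h2 := num_nonneg (b := b) j σ
    have hFpos : 0 < Fb b σ j := lt_of_lt_of_le one_pos (one_le_Fb hb hσ j)
    have hlog : Real.log (Fb b σ j) ≤ Fb b σ j - 1 := Real.log_le_sub_one_of_pos hFpos
    have hF1 : Fb b σ j - 1 = (∑ a ∈ Finset.Ico 1 b, ((a : ℝ) / (b : ℝ)) ^ ((j : ℝ) + 1 + σ)) /
        (1 - (b : ℝ) ^ (1 - ((j : ℝ) + 1) - σ)) := by unfold Fb; ring
    have hnum : (∑ a ∈ Finset.Ico 1 b, ((a : ℝ) / (b : ℝ)) ^ ((j : ℝ) + 1 + σ)) ≤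
        (b : ℝ) * r ^ j := by
      calc (∑ a ∈ Finset.Ico 1 b, ((a : ℝ) / (b : ℝ)) ^ ((j : ℝ) + 1 + σ))
          ≤ ∑ _a ∈ Finset.Ico 1 b, r ^ j := by
            apply Finset.sum_le_sum
            intro a ha
            rw [Finset.mem_Ico] at ha
            have ha1 : (1 : ℝ) ≤ (a : ℝ) := by exact_mod_cast ha.1
            have ha2 : (a : ℝ) ≤ (b : ℝ) - 1 := by
              have : (a : ℝ) + 1 ≤ (b : ℝ) := by exact_mod_cast ha.2
              linarith
            have hpos : 0 < (a : ℝ) / (b : ℝ) := div_pos (by linarith) hBpos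
            have hle1 : (a : ℝ) / (b : ℝ) ≤ 1 := by
              rw [div_le_one hBpos]; linarith
            have hj : (0 : ℝ) ≤ (j : ℝ) := Nat.cast_nonneg j
            calc ((a : ℝ) / (b : ℝ)) ^ ((j : ℝ) + 1 + σ)
                ≤ ((a : ℝ) / (b : ℝ)) ^ ((j : ℝ)) :=
                  Real.rpow_le_rpow_of_exponent_ge hpos hle1 (by linarith)
              _ ≤ r ^ ((j : ℝ)) := by
                  apply Real.rpow_le_rpow hpos.le _ hj
                  rw [hr]
                  gcongr
              _ = r ^ j := Real.rpow_natCast r j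
        _ ≤ (b : ℝ) * r ^ j := by
            rw [Finset.sum_const, nsmul_eq_mul]
            have hcard : ((Finset.Ico 1 b).card : ℝ) ≤ (b : ℝ) := by
              rw [Nat.card_Ico]; exact_mod_cast Nat.sub_le b 1
            have hrj : (0 : ℝ) ≤ r ^ j := pow_nonneg hr0 j
            exact mul_le_mul_of_nonneg_right hcard hrj
    have hden : d0 ≤ 1 - (b : ℝ) ^ (1 - ((j : ℝ) + 1) - σ) := by
      have hj : (0 : ℝ) ≤ (j : ℝ) := Nat.cast_nonneg j
      have : (b : ℝ) ^ (1 - ((j : ℝ) + 1) - σ) ≤ (b : ℝ) ^ (-σ) :=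
        Real.rpow_le_rpow_of_exponent_le hB.le (by linarith)
      rw [hd0]; linarith
    calc Real.log (Fb b σ j) ≤ Fb b σ j - 1 := hlog
      _ = _ := hF1
      _ ≤ ((b : ℝ) * r ^ j) / d0 := by
          apply div_le_div₀ (by positivity) hnum hd0pos hden
      _ = ((b : ℝ) / d0) * r ^ j := by ring
  apply Summable.of_nonneg_of_le
    (fun j => Real.log_nonneg (one_le_Fb hb hσ j)) key
  exact (summable_geometric_of_lt_one hr0 hr1).mul_left _

private lemma tprod_Fb_eq {b : ℕ} (hb : 1 < b) {σ : ℝ} (hσ : 0 < σ) :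
    (∏' j : ℕ, Fb b σ j) = Real.exp (∑' j : ℕ, Real.log (Fb b σ j)) := by
  exact (Real.rexp_tsum_eq_tprod (fun j => lt_of_lt_of_le one_pos (one_le_Fb hb hσ j))
    (summable_log_Fb hb hσ)).symm

/-- The function P_b(σ) = ∏_{j=1}^∞ (1 + (∑_{0<a<b} (a/b)^{j+σ})/(1 − b^{1−j−σ}))
is a decreasing function of σ on (0, ∞). -/
theorem Pb_antitone (b : ℕ) (hb : 1 < b) :
    AntitoneOn (fun σ : ℝ => ∏' j : ℕ,
      (1 + (∑ a ∈ Finset.Ico 1 b, ((a : ℝ) / (b : ℝ)) ^ ((j : ℝ) + 1 + σ)) /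
        (1 - (b : ℝ) ^ (1 - ((j : ℝ) + 1) - σ)))) (Set.Ioi (0 : ℝ)) := by
  intro σ hσ τ hτ hστ
  simp only [Set.mem_Ioi] at hσ hτ
  show (∏' j : ℕ, Fb b τ j) ≤ ∏' j : ℕ, Fb b σ j
  rw [tprod_Fb_eq hb hτ, tprod_Fb_eq hb hσ]
  apply Real.exp_le_exp.mpr
  apply Summable.tsum_le_tsum _ (summable_log_Fb hb hτ) (summable_log_Fb hb hσ)
  intro j
  exact Real.log_le_log (lt_of_lt_of_le one_pos (one_le_Fb hb hτ j)) (Fb_anti hb hσ hστ j)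
end

section
/- Let b > 1 be an integer, σ > 0 a real number, and m ≥ 0 an integer. Then c*_{m,b}(σ) > b^{−σ}. -/
open Finset

noncomputable def rb (t : ℝ) (j : ℕ) : ℝ := (∏ i ∈ Finset.range j, (t - i)) / (Nat.factorial j)

lemma rb_zero (t : ℝ) : rb t 0 = 1 := by simp [rb]

lemma rb_succ (t : ℝ) (j : ℕ) : rb t (j + 1) = t / (j + 1) * rb (t - 1) j := by
  unfold rb
  rw [Finset.prod_range_succ' (fun i => t - (i : ℝ)) j]
  push_cast [Nat.factorial_succ]
  field_simp
  ring_nf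

lemma rb_pos {t : ℝ} {j : ℕ} (h : ∀ i : ℕ, i < j → 0 < t - i) : 0 < rb t j := by
  unfold rb
  apply div_pos
  · exact Finset.prod_pos fun i hi => h i (Finset.mem_range.mp hi)
  · exact_mod_cast Nat.factorial_pos j

lemma key_s11 (σ : ℝ) (hσ : 0 < σ) (B : ℝ) (hB : 1 ≤ B) :
    ∀ m : ℕ, ∀ x ∈ Set.Icc (0:ℝ) (B-1),
      (1+x) ^ (σ + (m:ℝ)) ≤ (∑ j ∈ Finset.range (m+1), rb (σ + (m:ℝ)) j * x^j)
        + (B ^ σ - 1) * rb (σ + (m:ℝ)) m * x^m := by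
  intro m
  induction m with
  | zero =>
    intro x hx
    simp only [Nat.cast_zero, add_zero, Finset.sum_range_succ, Finset.sum_range_zero, rb_zero,
      pow_zero, mul_one, one_mul, zero_add]
    have h1 : (1+x) ^ σ ≤ B ^ σ :=
      Real.rpow_le_rpow (by linarith [hx.1]) (by linarith [hx.2]) hσ.le
    linarith
  | succ m ih =>
    intro x hx
    push_cast
    set t : ℝ := σ + ((m:ℝ) + 1) with ht
    have htσ : t - 1 = σ + (m:ℝ) := by ring
    set G : ℝ → ℝ := fun y => ((∑ j ∈ Finset.range (m+2), rb t j * y^j)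
        + (B ^ σ - 1) * rb t (m+1) * y^(m+1)) - (1+y) ^ t with hG
    have hderiv : ∀ y : ℝ, 0 ≤ y → HasDerivAt G
        (t * (((∑ j ∈ Finset.range (m+1), rb (σ + (m:ℝ)) j * y^j)
          + (B ^ σ - 1) * rb (σ + (m:ℝ)) m * y^m) - (1+y) ^ (σ + (m:ℝ)))) y := by
      intro y hy
      have h1 : HasDerivAt (fun y : ℝ => ∑ j ∈ Finset.range (m+2), rb t j * y^j)
          (∑ j ∈ Finset.range (m+2), rb t j * ((j:ℝ) * y^(j-1))) y :=
        HasDerivAt.fun_sum fun j _ => (hasDerivAt_pow j y).const_mul _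
      have h2 : ∑ j ∈ Finset.range (m+2), rb t j * ((j:ℝ) * y^(j-1))
          = t * ∑ j ∈ Finset.range (m+1), rb (σ + (m:ℝ)) j * y^j := by
        rw [Finset.sum_range_succ' (fun j => rb t j * ((j:ℝ) * y^(j-1))) (m+1)]
        simp only [Nat.cast_zero, zero_mul, mul_zero, add_zero, Nat.add_sub_cancel,
          Nat.cast_add, Nat.cast_one]
        rw [Finset.mul_sum]
        refine Finset.sum_congr rfl fun j _ => ?_
        rw [rb_succ t j, htσ]
        have hj : ((j:ℝ) + 1) ≠ 0 := by positivity
        field_simp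
      have h3 : HasDerivAt (fun y : ℝ => (B ^ σ - 1) * rb t (m+1) * y^(m+1))
          ((B ^ σ - 1) * rb t (m+1) * (((m+1:ℕ):ℝ) * y^m)) y := by
        have := (hasDerivAt_pow (m+1) y).const_mul ((B ^ σ - 1) * rb t (m+1))
        simpa using this
      have hne : (1+y) ≠ 0 := by positivity
      have h4 : HasDerivAt (fun y : ℝ => (1+y) ^ t) (t * (1+y) ^ (σ + (m:ℝ))) y := by
        have hc : HasDerivAt (fun y : ℝ => 1 + y) 1 y := (hasDerivAt_id y).const_add 1
        have := (Real.hasDerivAt_rpow_const (x := 1+y) (p := t) (Or.inl hne)).comp y hc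
        simpa [htσ, Function.comp_def] using this
      have H := (h1.add h3).sub h4
      convert H using 1
      · rfl
      · rfl
      · rfl
      rw [h2]
      have hrb : rb t (m+1) * ((m+1:ℕ):ℝ) = t * rb (σ + (m:ℝ)) m := by
        rw [rb_succ t m, htσ]
        have : ((m:ℝ) + 1) ≠ 0 := by positivity
        push_cast
        field_simp
      push_cast at hrb ⊢
      linear_combination (-((B ^ σ - 1) * y ^ m)) * hrb
    have hcont : ContinuousOn G (Set.Icc 0 (B-1)) :=
      fun y hy => ((hderiv y hy.1).continuousAt).continuousWithinAt
    have hdiff : DifferentiableOn ℝ G (interior (Set.Icc 0 (B-1))) := by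
      rw [interior_Icc]
      exact fun y hy => ((hderiv y hy.1.le).differentiableAt).differentiableWithinAt
    have hd0 : ∀ y ∈ interior (Set.Icc (0:ℝ) (B-1)), 0 ≤ deriv G y := by
      rw [interior_Icc]
      intro y hy
      rw [(hderiv y hy.1.le).deriv]
      have hg := ih y ⟨hy.1.le, hy.2.le⟩
      have ht0 : (0:ℝ) < t := by positivity
      apply mul_nonneg ht0.le
      linarith
    have hmono : MonotoneOn G (Set.Icc 0 (B-1)) :=
      monotoneOn_of_deriv_nonneg (convex_Icc _ _) hcont hdiff hd0
    have h0mem : (0:ℝ) ∈ Set.Icc (0:ℝ) (B-1) := ⟨le_refl 0, by linarith⟩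
    have hG0 : G 0 = 0 := by
      simp [hG, Finset.sum_range_succ' (fun j => rb t j * (0:ℝ)^j) (m+1), rb_zero,
        Real.one_rpow]
    have hle := hmono h0mem hx hx.1
    rw [hG0] at hle
    simp only [hG] at hle
    linarith

lemma gamma_cast (b j : ℕ) : ((∑ a ∈ Finset.Ico 1 b, a ^ j : ℕ) : ℝ)
    = ∑ a ∈ Finset.Ico 1 b, ((a:ℝ))^j := by push_cast; rfl

lemma star (b : ℕ) (hb : 1 < b) (σ : ℝ) (hσ : 0 < σ) (M : ℕ) :
    (b:ℝ) ^ (σ + (M:ℝ)) ≤ (∑ j ∈ Finset.range (M+1), rb (σ + (M:ℝ)) j * ((∑ a ∈ Finset.Ico 1 b, a ^ j : ℕ) : ℝ))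
      + ((b:ℝ) ^ σ - 1) * rb (σ + (M:ℝ)) M * ((∑ a ∈ Finset.Ico 1 b, a ^ M : ℕ) : ℝ) := by
  have hbR : (1:ℝ) ≤ (b:ℝ) := by exact_mod_cast hb.le
  have hkey := key_s11 σ hσ (b:ℝ) hbR
  set t : ℝ := σ + (M:ℝ) with ht
  have hb1 : (1:ℕ) ≤ b := hb.le
  have hcastb : ((1:ℝ) + ((b-1 : ℕ):ℝ)) = (b:ℝ) := by
    rw [Nat.cast_sub hb1]; push_cast; ring
  have hmem : b - 1 ∈ Finset.Ico 1 b :=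
    Finset.mem_Ico.mpr ⟨Nat.le_sub_one_of_lt hb, Nat.sub_lt (by omega) one_pos⟩
  have step1 : (b:ℝ) ^ t ≤ ∑ a ∈ Finset.Ico 1 b, ((1:ℝ)+(a:ℝ)) ^ t := by
    have h := Finset.single_le_sum (f := fun a : ℕ => ((1:ℝ)+(a:ℝ)) ^ t)
      (fun a _ => Real.rpow_nonneg (by positivity) _) hmem
    rwa [hcastb] at h
  have step2 : ∑ a ∈ Finset.Ico 1 b, ((1:ℝ)+(a:ℝ)) ^ t
      ≤ ∑ a ∈ Finset.Ico 1 b, ((∑ j ∈ Finset.range (M+1), rb t j * ((a:ℝ))^j)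
        + ((b:ℝ) ^ σ - 1) * rb t M * ((a:ℝ))^M) := by
    apply Finset.sum_le_sum
    intro a ha
    have h2 := (Finset.mem_Ico.mp ha).2
    refine hkey M (a:ℝ) ⟨by positivity, ?_⟩
    have : (a:ℝ) + 1 ≤ (b:ℝ) := by exact_mod_cast h2
    linarith
  have step3 : ∑ a ∈ Finset.Ico 1 b, ((∑ j ∈ Finset.range (M+1), rb t j * ((a:ℝ))^j)
        + ((b:ℝ) ^ σ - 1) * rb t M * ((a:ℝ))^M)
      = (∑ j ∈ Finset.range (M+1), rb t j * ((∑ a ∈ Finset.Ico 1 b, a ^ j : ℕ) : ℝ))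
        + ((b:ℝ) ^ σ - 1) * rb t M * ((∑ a ∈ Finset.Ico 1 b, a ^ M : ℕ) : ℝ) := by
    rw [Finset.sum_add_distrib]
    congr 1
    · rw [Finset.sum_comm]
      refine Finset.sum_congr rfl fun j _ => ?_
      rw [gamma_cast, Finset.mul_sum]
    · rw [gamma_cast, Finset.mul_sum]
  linarith [step1, step2, step3.le, step3.ge]

/-- Proposition 2: c*_{m,b}(σ) > b^{−σ} for every m ≥ 0 and σ > 0. -/
theorem cstar_lower_bound (b : ℕ) (hb : 1 < b) (σ : ℝ) (hσ : 0 < σ) (m : ℕ) :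
    (b : ℝ) ^ (-σ) < cstarR b σ m := by
  induction m using Nat.strong_induction_on with
  | _ m ih =>
  have hbR : (1:ℝ) < (b:ℝ) := by exact_mod_cast hb
  have hbσ1 : (b:ℝ) ^ (-σ) < 1 := Real.rpow_lt_one_of_one_lt_of_neg hbR (by linarith)
  match m with
  | 0 =>
    rw [cstarR]
    exact hbσ1
  | Nat.succ m =>
    rw [cstarR]
    set t : ℝ := σ + (m:ℝ) + 1 with htdef
    -- rewrite coefficients as rb
    have hcoef : ∀ j : ℕ, ((∏ i ∈ Finset.range (j + 1), (t - (i : ℝ))) / (Nat.factorial (j + 1) : ℝ))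
        = rb t (j+1) := fun j => rfl
    have ht1 : (1:ℝ) < t := by
      have : (0:ℝ) ≤ (m:ℝ) := Nat.cast_nonneg m
      simp only [htdef]; linarith
    have hD : (0:ℝ) < (b:ℝ) ^ t - (b:ℝ) := by
      have h1 : (b:ℝ) ^ (1:ℝ) < (b:ℝ) ^ t := Real.rpow_lt_rpow_of_exponent_lt hbR ht1
      rwa [Real.rpow_one, ← sub_pos] at h1
    have hγpos : ∀ k : ℕ, 0 < ((gammaNat b k : ℕ) : ℝ) := by
      intro k
      have : 0 < gammaNat b k := by
        refine Finset.sum_pos (fun a ha => pow_pos (Finset.mem_Ico.mp ha).1 k)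
          ⟨1, Finset.mem_Ico.mpr ⟨le_refl 1, hb⟩⟩
      exact_mod_cast this
    have hrbpos : ∀ j : ℕ, j ≤ m → 0 < rb t (j+1) := by
      intro j hj
      apply div_pos
      · refine Finset.prod_pos fun i hi => ?_
        have hi' : i ≤ j := Nat.lt_succ_iff.mp (Finset.mem_range.mp hi)
        have : (i:ℝ) ≤ (m:ℝ) := by exact_mod_cast hi'.trans hj
        simp only [htdef]; linarith
      · exact_mod_cast Nat.factorial_pos (j+1)
    have hbnegpos : (0:ℝ) < (b:ℝ) ^ (-σ) := Real.rpow_pos_of_pos (by linarith) _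
    have hbspos : (0:ℝ) < (b:ℝ) ^ σ := Real.rpow_pos_of_pos (by linarith) _
    have hbs1 : (b:ℝ) ^ (-σ) * (b:ℝ) ^ σ = 1 := by
      rw [← Real.rpow_add (by linarith : (0:ℝ) < (b:ℝ))]
      simp
    -- abbreviations
    set P : ℝ := ∑ j ∈ Finset.range m, rb t (j+1) * ((gammaNat b (j+1) : ℕ) : ℝ) with hP
    set R : ℝ := rb t (m+1) * ((gammaNat b (m+1) : ℕ) : ℝ) with hR
    -- star at M = m+1
    have hstar := star b hb σ hσ (m+1)
    have hcast : σ + ((m+1 : ℕ) : ℝ) = t := by simp only [htdef]; push_cast; ring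
    rw [hcast] at hstar
    -- split sums in hstar
    rw [Finset.sum_range_succ' (fun j => rb t j * ((∑ a ∈ Finset.Ico 1 b, a ^ j : ℕ) : ℝ)) (m+1)] at hstar
    have hγ0 : ((∑ a ∈ Finset.Ico 1 b, a ^ 0 : ℕ) : ℝ) = (b:ℝ) - 1 := by
      simp only [pow_zero]
      rw [Finset.sum_const, Nat.card_Ico, smul_eq_mul, mul_one]
      rw [Nat.cast_sub hb.le]
      simp
    have hrb0 : rb t 0 = 1 := by simp [rb]
    rw [hγ0, hrb0] at hstar
    have hsplit : ∑ j ∈ Finset.range (m+1), rb t (j+1) * ((∑ a ∈ Finset.Ico 1 b, a ^ (j+1) : ℕ) : ℝ)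
        = P + R := by
      rw [Finset.sum_range_succ]
      rfl
    rw [hsplit] at hstar
    -- hstar : b^t ≤ P + R + 1*(b-1) + (b^σ-1)*rb t (m+1)*γ(m+1)
    -- lower bound the recurrence sum
    have hSsplit : (∑ j ∈ Finset.range (m + 1),
          ((∏ i ∈ Finset.range (j + 1), (t - (i : ℝ))) / (Nat.factorial (j + 1) : ℝ))
            * (gammaNat b (j + 1) : ℝ) * cstarR b σ (m - j))
        = (∑ j ∈ Finset.range m, rb t (j+1) * (gammaNat b (j+1) : ℝ) * cstarR b σ (m - j)) + R := by
      rw [Finset.sum_range_succ]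
      have : cstarR b σ (m - m) = 1 := by rw [Nat.sub_self]; rw [cstarR]
      rw [this]
      simp only [hcoef, mul_one]
      rfl
    have hSlow : P * (b:ℝ)^(-σ) ≤ ∑ j ∈ Finset.range m, rb t (j+1) * (gammaNat b (j+1) : ℝ) * cstarR b σ (m - j) := by
      rw [hP, Finset.sum_mul]
      apply Finset.sum_le_sum
      intro j hj
      have hjm : j < m := Finset.mem_range.mp hj
      have hih := ih (m - j) (by omega)
      have hpos : 0 < rb t (j+1) * ((gammaNat b (j+1) : ℕ) : ℝ) :=
        mul_pos (hrbpos j hjm.le) (hγpos (j+1))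
      exact mul_le_mul_of_nonneg_left hih.le hpos.le
    -- combine
    have hRpos : 0 < R := mul_pos (hrbpos m le_rfl) (hγpos (m+1))
    have hkey2 : (b:ℝ)^(-σ) * ((b:ℝ)^t - (b:ℝ)) < P * (b:ℝ)^(-σ) + R := by
      have hlt : (b:ℝ)^t - (b:ℝ) < P + (b:ℝ)^σ * R := by
        have hR' : rb t (m+1) * ((∑ a ∈ Finset.Ico 1 b, a ^ (m+1) : ℕ) : ℝ) = R := rfl
        rw [mul_assoc, hR'] at hstar
        have hexp : ((b:ℝ)^σ - 1) * R = (b:ℝ)^σ * R - R := by ring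
        rw [hexp] at hstar
        linarith
      have := mul_lt_mul_of_pos_left hlt hbnegpos
      calc (b:ℝ)^(-σ) * ((b:ℝ)^t - (b:ℝ)) < (b:ℝ)^(-σ) * (P + (b:ℝ)^σ * R) := this
        _ = P * (b:ℝ)^(-σ) + R := by
            rw [mul_add, ← mul_assoc, hbs1]; ring
    rw [hSsplit]
    rw [div_mul_eq_mul_div, one_mul, lt_div_iff₀ hD]
    calc (b:ℝ)^(-σ) * ((b:ℝ)^t - (b:ℝ)) < P * (b:ℝ)^(-σ) + R := hkey2
      _ ≤ _ := by linarith [hSlow]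
end

section
/- Let b > 1 be an integer. Then c*_{m,b}(1) = 1 for every integer m ≥ 0. -/
open Finset

lemma prod_cast_descFactorial (n : ℕ) : ∀ k : ℕ, k ≤ n →
    ∏ i ∈ Finset.range k, ((n : ℝ) - (i : ℝ)) = (n.descFactorial k : ℝ)
  | 0, _ => by simp
  | (k + 1), hk => by
      rw [Finset.prod_range_succ, prod_cast_descFactorial n k (Nat.le_of_succ_le hk),
        Nat.descFactorial_succ]
      have : (k : ℝ) ≤ (n : ℝ) := by exact_mod_cast Nat.le_of_succ_le hk
      push_cast [Nat.cast_sub (Nat.le_of_succ_le hk)]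
      ring

lemma binom_gamma_sum (b m : ℕ) (hb : 1 < b) :
    ∑ j ∈ Finset.range (m + 1), (((m + 2).choose (j + 1) : ℝ) * (gammaNat b (j + 1) : ℝ))
      = (b : ℝ) ^ (m + 2) - (b : ℝ) := by
  have inner : ∀ a : ℕ,
      ∑ j ∈ Finset.range (m + 1), (((m + 2).choose (j + 1) : ℝ) * (a : ℝ) ^ (j + 1))
        = ((a : ℝ) + 1) ^ (m + 2) - (a : ℝ) ^ (m + 2) - 1 := by
    intro a
    have h := add_pow (a : ℝ) 1 (m + 2)
    simp only [one_pow, mul_one] at h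
    rw [Finset.sum_range_succ, Finset.sum_range_succ'] at h
    simp only [Nat.choose_self, Nat.choose_zero_right, Nat.cast_one, pow_zero, one_mul,
      mul_one] at h
    have : ∑ j ∈ Finset.range (m + 1), (((m + 2).choose (j + 1) : ℝ) * (a : ℝ) ^ (j + 1))
        = ∑ j ∈ Finset.range (m + 1), ((a : ℝ) ^ (j + 1) * ((m + 2).choose (j + 1) : ℝ)) := by
      apply Finset.sum_congr rfl; intro j _; ring
    rw [this]
    linarith [h]
  calc ∑ j ∈ Finset.range (m + 1), (((m + 2).choose (j + 1) : ℝ) * (gammaNat b (j + 1) : ℝ))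
      = ∑ j ∈ Finset.range (m + 1), ∑ a ∈ Finset.Ico 1 b,
          (((m + 2).choose (j + 1) : ℝ) * (a : ℝ) ^ (j + 1)) := by
        apply Finset.sum_congr rfl; intro j _
        rw [gammaNat]; push_cast; rw [Finset.mul_sum]
    _ = ∑ a ∈ Finset.Ico 1 b, ∑ j ∈ Finset.range (m + 1),
          (((m + 2).choose (j + 1) : ℝ) * (a : ℝ) ^ (j + 1)) := Finset.sum_comm
    _ = ∑ a ∈ Finset.Ico 1 b, (((a : ℝ) + 1) ^ (m + 2) - (a : ℝ) ^ (m + 2) - 1) := by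
        apply Finset.sum_congr rfl; intro a _; exact inner a
    _ = (b : ℝ) ^ (m + 2) - (b : ℝ) := by
        rw [Finset.sum_sub_distrib, Finset.sum_const, Nat.card_Ico, nsmul_eq_mul, mul_one]
        have tel : ∑ a ∈ Finset.Ico 1 b, (((a : ℝ) + 1) ^ (m + 2) - (a : ℝ) ^ (m + 2))
            = (b : ℝ) ^ (m + 2) - 1 := by
          rw [Finset.sum_Ico_eq_sum_range]
          have := Finset.sum_range_sub (fun i => ((1 + i : ℕ) : ℝ) ^ (m + 2)) (b - 1)
          rw [show (1 : ℕ) + (b - 1) = b by omega] at this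
          norm_num at this
          rw [← this, Finset.sum_sub_distrib]
          congr 1 <;> (apply Finset.sum_congr rfl; intro i _; push_cast; ring)
        rw [tel]
        have : ((b - 1 : ℕ) : ℝ) = (b : ℝ) - 1 := by
          push_cast [Nat.cast_sub hb.le]; ring
        rw [this]; ring

/-- c*_{m,b}(1) = 1 for every m ≥ 0. -/
theorem cstar_at_one (b : ℕ) (hb : 1 < b) (m : ℕ) :
    cstarR b 1 m = 1 := by
  induction m using Nat.strong_induction_on with
  | _ m IH =>
    match m with
    | 0 => rw [cstarR]
    | (m + 1) =>
      rw [cstarR]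
      have hbR : (1 : ℝ) < (b : ℝ) := by exact_mod_cast hb
      have hexp : (1 : ℝ) + (m : ℝ) + 1 = ((m + 2 : ℕ) : ℝ) := by push_cast; ring
      have hrpow : (b : ℝ) ^ ((1 : ℝ) + (m : ℝ) + 1) = (b : ℝ) ^ (m + 2) := by
        rw [hexp, Real.rpow_natCast]
      have hsum : ∑ j ∈ Finset.range (m + 1),
          ((∏ i ∈ Finset.range (j + 1), ((1 : ℝ) + (m : ℝ) + 1 - (i : ℝ))) /
              (Nat.factorial (j + 1) : ℝ))
            * (gammaNat b (j + 1) : ℝ) * cstarR b 1 (m - j)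
          = (b : ℝ) ^ (m + 2) - (b : ℝ) := by
        rw [← binom_gamma_sum b m hb]
        apply Finset.sum_congr rfl
        intro j hj
        rw [Finset.mem_range] at hj
        have hIH : cstarR b 1 (m - j) = 1 := IH (m - j) (Nat.lt_succ_of_le (Nat.sub_le m j))
        have hprod : ∏ i ∈ Finset.range (j + 1), ((1 : ℝ) + (m : ℝ) + 1 - (i : ℝ))
            = ((m + 2).descFactorial (j + 1) : ℝ) := by
          rw [← prod_cast_descFactorial (m + 2) (j + 1) (by omega)]
          apply Finset.prod_congr rfl
          intro i _; push_cast; ring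
        rw [hIH, hprod, Nat.descFactorial_eq_factorial_mul_choose]
        have hfac : ((j + 1).factorial : ℝ) ≠ 0 := by
          exact_mod_cast (Nat.factorial_pos (j + 1)).ne'
        push_cast
        field_simp
      rw [hrpow, hsum]
      have hne : (b : ℝ) ^ (m + 2) - (b : ℝ) ≠ 0 := by
        have : (b : ℝ) ^ 1 < (b : ℝ) ^ (m + 2) := pow_lt_pow_right₀ hbR (by omega)
        simp only [pow_one] at this
        linarith
      field_simp
end

section
/- Let b > 1 be an integer and σ > 0 a real number. Define w_m = (1 − b^{−σ}) ∑_{k=0}^{∞} b^{−σk} (1 − b^{−k})^m for each integer m ≥ 0 (the series converges). Then w_0 = 1 and, for every m ≥ 1, (b^{m+σ} − 1) w_m = ∑_{j=1}^{m} C(m,j) (b−1)^j w_{m−j}, where C(m,j) is the binomial coefficient. -/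
/-!
Put `q = b^{-σ}`, so that `w_m = (1 - q) S_m` with `S_m = ∑_k q^k (1 - b^{-k})^m`.
The binomial theorem and the identity `(b - 1) + (1 - b^{-k}) = b (1 - b^{-(k+1)})` give,
for every `k`,
`∑_{j ≥ 1} C(m,j) (b-1)^j (1 - b^{-k})^{m-j} = b^m (1 - b^{-(k+1)})^m - (1 - b^{-k})^m`.
Weighting by `q^k` and summing over `k`, the first term is the series `S_m` shifted by one index
(its `k = 0` term vanishes for `m ≥ 1`), hence equals `b^m q^{-1} S_m = b^{m+σ} S_m`.
-/

open Finset

theorem sum_Icc_choose_mul_pow_mul_pow {R : Type*} [CommRing R] (a x : R) (m : ℕ) :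
    ∑ j ∈ Icc 1 m, (m.choose j : R) * a ^ j * x ^ (m - j) = (a + x) ^ m - x ^ m := by
  have hrange : range (m + 1) = insert 0 (Icc 1 m) := by
    ext j; simp only [mem_range, mem_insert, mem_Icc]; omega
  rw [add_pow, hrange, sum_insert (by simp)]
  simp only [pow_zero, one_mul, Nat.sub_zero, Nat.choose_zero_right, Nat.cast_one, mul_one,
    add_sub_cancel_left]
  exact sum_congr rfl fun j _ => by ring

noncomputable def geomOneSubPowSum (q r : ℝ) (m : ℕ) : ℝ :=
  ∑' k : ℕ, q ^ k * (1 - r ^ k) ^ m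

section

variable {q r : ℝ}

theorem summable_geom_mul_pow_of_mem_Icc (hq₀ : 0 ≤ q) (hq₁ : q < 1) {x : ℕ → ℝ}
    (hx : ∀ k, x k ∈ Set.Icc 0 1) (m : ℕ) : Summable fun k : ℕ => q ^ k * x k ^ m :=
  (summable_geometric_of_lt_one hq₀ hq₁).of_nonneg_of_le
    (fun k => mul_nonneg (pow_nonneg hq₀ k) (pow_nonneg (hx k).1 m))
    fun k => mul_le_of_le_one_right (pow_nonneg hq₀ k) (pow_le_one₀ (hx k).1 (hx k).2)

theorem one_sub_pow_mem_Icc (hr₀ : 0 ≤ r) (hr₁ : r ≤ 1) (k : ℕ) :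
    1 - r ^ k ∈ Set.Icc 0 1 :=
  ⟨sub_nonneg.2 (pow_le_one₀ hr₀ hr₁), sub_le_self 1 (pow_nonneg hr₀ k)⟩

theorem geomOneSubPowSum_zero (hq₀ : 0 ≤ q) (hq₁ : q < 1) :
    geomOneSubPowSum q r 0 = (1 - q)⁻¹ := by
  simpa [geomOneSubPowSum] using tsum_geometric_of_lt_one hq₀ hq₁

theorem tsum_geom_mul_one_sub_pow_succ {m : ℕ} (hq : q ≠ 0)
    (hsum : Summable fun k : ℕ => q ^ k * (1 - r ^ k) ^ m) (hm : m ≠ 0) :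
    ∑' k : ℕ, q ^ k * (1 - r ^ (k + 1)) ^ m = q⁻¹ * geomOneSubPowSum q r m := by
  rw [geomOneSubPowSum, hsum.tsum_eq_zero_add]
  simp only [pow_zero, sub_self, zero_pow hm, mul_zero, zero_add]
  rw [← tsum_mul_left]
  exact tsum_congr fun k => by field_simp; ring

theorem one_sub_inv_pow_add_sub_one {b : ℝ} (hb : b ≠ 0) (k : ℕ) :
    (b - 1) + (1 - b⁻¹ ^ k) = b * (1 - b⁻¹ ^ (k + 1)) := by
  rw [pow_succ, mul_sub, mul_one, mul_left_comm, mul_inv_cancel₀ hb, mul_one]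
  ring

theorem sum_Icc_choose_mul_geomOneSubPowSum {b : ℝ} (hb : 1 ≤ b) (hq₀ : 0 < q) (hq₁ : q < 1)
    {m : ℕ} (hm : m ≠ 0) :
    ∑ j ∈ Icc 1 m, (m.choose j : ℝ) * (b - 1) ^ j * geomOneSubPowSum q b⁻¹ (m - j) =
      (b ^ m * q⁻¹ - 1) * geomOneSubPowSum q b⁻¹ m := by
  have hr₀ : 0 ≤ b⁻¹ := inv_nonneg.2 (by linarith)
  have hsum := summable_geom_mul_pow_of_mem_Icc hq₀.le hq₁
    (one_sub_pow_mem_Icc hr₀ (inv_le_one_of_one_le₀ hb))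
  have hsum_succ := summable_geom_mul_pow_of_mem_Icc hq₀.le hq₁
    (fun k => one_sub_pow_mem_Icc hr₀ (inv_le_one_of_one_le₀ hb) (k + 1)) m
  have hb₀ : b ≠ 0 := by positivity
  have hpointwise (k : ℕ) :
      ∑ j ∈ Icc 1 m, (m.choose j : ℝ) * (b - 1) ^ j * (q ^ k * (1 - b⁻¹ ^ k) ^ (m - j)) =
        b ^ m * (q ^ k * (1 - b⁻¹ ^ (k + 1)) ^ m) - q ^ k * (1 - b⁻¹ ^ k) ^ m := by
    have h := sum_Icc_choose_mul_pow_mul_pow (b - 1) (1 - b⁻¹ ^ k) m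
    rw [one_sub_inv_pow_add_sub_one hb₀, mul_pow] at h
    calc _ = q ^ k *
          ∑ j ∈ Icc 1 m, (m.choose j : ℝ) * (b - 1) ^ j * (1 - b⁻¹ ^ k) ^ (m - j) := by
          rw [mul_sum]; exact sum_congr rfl fun j _ => by ring
      _ = _ := by rw [h]; ring
  calc _ = ∑' k : ℕ, ∑ j ∈ Icc 1 m,
        (m.choose j : ℝ) * (b - 1) ^ j * (q ^ k * (1 - b⁻¹ ^ k) ^ (m - j)) := by
        rw [Summable.tsum_finsetSum fun j _ => (hsum (m - j)).mul_left _]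
        exact sum_congr rfl fun j _ => by rw [geomOneSubPowSum, tsum_mul_left]
    _ = b ^ m * ∑' k : ℕ, q ^ k * (1 - b⁻¹ ^ (k + 1)) ^ m - geomOneSubPowSum q b⁻¹ m := by
        rw [tsum_congr hpointwise, (hsum_succ.mul_left _).tsum_sub (hsum m), tsum_mul_left,
          geomOneSubPowSum]
    _ = _ := by rw [tsum_geom_mul_one_sub_pow_succ hq₀.ne' (hsum m) hm]; ring

end

/-- The solution w_m = (1 − b^{−σ}) ∑_{k=0}^∞ b^{−σk} (1 − b^{−k})^m of the modified
recurrence: the series converges, w_0 = 1 and, for m ≥ 1,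
(b^{m+σ} − 1) w_m = ∑_{j=1}^{m} C(m,j) (b−1)^j w_{m−j}. -/
theorem w_recurrence (b : ℕ) (hb : 1 < b) (σ : ℝ) (hσ : 0 < σ) (w : ℕ → ℝ)
    (hw : ∀ m : ℕ, w m = (1 - (b : ℝ) ^ (-σ)) *
      ∑' k : ℕ, (b : ℝ) ^ (-(σ * (k : ℝ))) * (1 - (b : ℝ) ^ (-(k : ℝ))) ^ m) :
    (∀ m : ℕ, Summable (fun k : ℕ =>
        (b : ℝ) ^ (-(σ * (k : ℝ))) * (1 - (b : ℝ) ^ (-(k : ℝ))) ^ m)) ∧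
    w 0 = 1 ∧
    ∀ m : ℕ, 1 ≤ m → ((b : ℝ) ^ ((m : ℝ) + σ) - 1) * w m =
      ∑ j ∈ Finset.Icc 1 m, (Nat.choose m j : ℝ) * ((b : ℝ) - 1) ^ j * w (m - j) := by
  have hB : (1 : ℝ) < b := by exact_mod_cast hb
  have hB₀ : (0 : ℝ) ≤ b := by positivity
  set q : ℝ := (b : ℝ) ^ (-σ) with hq
  have hq₀ : 0 < q := by positivity
  have hq₁ : q < 1 := Real.rpow_lt_one_of_one_lt_of_neg hB (neg_neg_of_pos hσ)
  have hterm (m k : ℕ) : (b : ℝ) ^ (-(σ * (k : ℝ))) * (1 - (b : ℝ) ^ (-(k : ℝ))) ^ m =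
      q ^ k * (1 - (b : ℝ)⁻¹ ^ k) ^ m := by
    rw [← neg_mul, Real.rpow_mul_natCast hB₀, Real.rpow_neg hB₀ (k : ℝ), Real.rpow_natCast,
      inv_pow]
  have hw' (m : ℕ) : w m = (1 - q) * geomOneSubPowSum q (b : ℝ)⁻¹ m := by
    rw [hw, geomOneSubPowSum, tsum_congr (hterm m)]
  refine ⟨fun m => ?_, ?_, fun m hm => ?_⟩
  · simp_rw [hterm m]
    exact summable_geom_mul_pow_of_mem_Icc hq₀.le hq₁
      (one_sub_pow_mem_Icc (by positivity) (inv_le_one_of_one_le₀ hB.le)) m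
  · rw [hw', geomOneSubPowSum_zero hq₀.le hq₁, mul_inv_cancel₀ (by linarith)]
  · have hpow : (b : ℝ) ^ ((m : ℝ) + σ) = (b : ℝ) ^ m * q⁻¹ := by
      rw [Real.rpow_add (by positivity), Real.rpow_natCast, hq, Real.rpow_neg hB₀, inv_inv]
    simp only [hw', mul_left_comm _ (1 - q), ← mul_sum]
    rw [sum_Icc_choose_mul_geomOneSubPowSum hB.le hq₀ hq₁ (by omega), hpow]
end

section
/- Let b > 1 be an integer, σ > 0 a real number, and m ≥ 1 an integer. Then ∫_0^1 (1 − t^{1/σ})^m dt < (b^σ − 1) ∑_{k=1}^{∞} b^{−kσ} (1 − b^{−k})^m. -/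
open Finset

/-- For b > 1, σ > 0 and m ≥ 1:
∫₀¹ (1 − t^{1/σ})^m dt < (b^σ − 1) ∑_{k=1}^∞ b^{−kσ} (1 − b^{−k})^m. -/
theorem integral_lt_riemann_sum (b : ℕ) (hb : 1 < b) (σ : ℝ) (hσ : 0 < σ) (m : ℕ) (hm : 1 ≤ m) :
    ∫ t in (0 : ℝ)..1, (1 - t ^ (1 / σ)) ^ m <
      ((b : ℝ) ^ σ - 1) *
        ∑' k : ℕ, (b : ℝ) ^ (-(((k : ℝ) + 1) * σ)) * (1 - (b : ℝ) ^ (-((k : ℝ) + 1))) ^ m := by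
  have hb1 : (1:ℝ) < b := by exact_mod_cast hb
  have hb0 : (0:ℝ) < b := by linarith
  set r : ℝ := (b:ℝ) ^ (-σ) with hr
  have hr0 : 0 < r := Real.rpow_pos_of_pos hb0 _
  have hr1 : r < 1 := Real.rpow_lt_one_of_one_lt_of_neg hb1 (by linarith)
  set f : ℝ → ℝ := fun t => (1 - t ^ (1/σ)) ^ m with hf
  have hfc : Continuous f := by
    apply Continuous.pow
    apply continuous_const.sub
    exact continuous_iff_continuousAt.mpr fun x =>
      Real.continuousAt_rpow_const x _ (Or.inr (by positivity))
  have fmono : ∀ x y : ℝ, 0 ≤ x → x ≤ y → y ≤ 1 → f y ≤ f x := by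
    intro x y hx hxy hy1
    have h1 : y ^ (1/σ) ≤ 1 := Real.rpow_le_one (le_trans hx hxy) hy1 (by positivity)
    have h2 : x ^ (1/σ) ≤ y ^ (1/σ) := Real.rpow_le_rpow hx hxy (by positivity)
    exact pow_le_pow_left₀ (by linarith) (by linarith) m
  have fstrict : ∀ x y : ℝ, 0 ≤ x → x < y → y ≤ 1 → x < 1 → f y < f x := by
    intro x y hx hxy hy1 hx1
    have h1 : y ^ (1/σ) ≤ 1 := Real.rpow_le_one (le_trans hx hxy.le) hy1 (by positivity)
    have h2 : x ^ (1/σ) < y ^ (1/σ) := Real.rpow_lt_rpow hx hxy (by positivity)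
    exact pow_lt_pow_left₀ (by linarith) (by linarith) (by omega)
  have fle1 : ∀ x : ℝ, 0 ≤ x → x ≤ 1 → f x ≤ 1 := by
    intro x hx h
    have h1 : x ^ (1/σ) ≤ 1 := Real.rpow_le_one hx h (by positivity)
    have h2 : (0:ℝ) ≤ x ^ (1/σ) := Real.rpow_nonneg hx _
    exact pow_le_one₀ (by linarith) (by linarith)
  -- rectangle bound
  have key : ∀ p q : ℝ, 0 ≤ p → p ≤ q → q ≤ 1 → ∫ t in p..q, f t ≤ (q - p) * f p := by
    intro p q hp hpq hq1
    have h1 : ∫ t in p..q, f t ≤ ∫ _t in p..q, f p := by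
      apply intervalIntegral.integral_mono_on hpq (hfc.intervalIntegrable _ _)
        intervalIntegrable_const
      intro x hx
      exact fmono p x hp hx.1 (le_trans hx.2 hq1)
    simpa [smul_eq_mul] using h1
  -- powers of r
  have hrpow1 : ∀ k : ℕ, (0:ℝ) < r ^ k := fun k => pow_pos hr0 k
  have hrpow2 : ∀ k : ℕ, r ^ k ≤ 1 := fun k => pow_le_one₀ hr0.le hr1.le
  have hrmono : ∀ k : ℕ, r ^ (k+1) ≤ r ^ k := fun k =>
    pow_le_pow_of_le_one hr0.le hr1.le (by omega)
  -- the strict gap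
  set c : ℝ := (1 + r) / 2 with hc
  have hrc : r < c := by rw [hc]; linarith
  have hc1 : c < 1 := by rw [hc]; linarith
  set ε : ℝ := (1 - c) * (f r - f c) with hε
  have hε0 : 0 < ε := by
    apply mul_pos (by linarith)
    have := fstrict r c hr0.le hrc hc1.le hr1
    linarith
  -- term of the sum
  set g : ℕ → ℝ := fun k => (r ^ k - r ^ (k+1)) * f (r ^ (k+1)) with hg
  have hg0 : ∀ k, 0 ≤ g k := by
    intro k
    apply mul_nonneg (by have := hrmono k; linarith)
    exact pow_nonneg (by
      have : (r ^ (k+1) : ℝ) ^ (1/σ) ≤ 1 :=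
        Real.rpow_le_one (hrpow1 (k+1)).le (hrpow2 (k+1)) (by positivity)
      linarith) m
  have hgle : ∀ k, g k ≤ r ^ k := by
    intro k
    calc g k ≤ (r ^ k - r ^ (k+1)) * 1 := by
          apply mul_le_mul_of_nonneg_left _ (by have := hrmono k; linarith)
          exact fle1 _ (hrpow1 (k+1)).le (hrpow2 (k+1))
      _ ≤ r ^ k := by have := (hrpow1 (k+1)).le; linarith
  have hgsum : Summable g :=
    Summable.of_nonneg_of_le hg0 hgle (summable_geometric_of_lt_one hr0.le hr1)
  -- partial sums with gap, N ≥ 1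
  have claimA : ∀ N : ℕ, 1 ≤ N → ∫ t in (r ^ N)..1, f t ≤ (∑ k ∈ range N, g k) - ε := by
    intro N hN
    induction N with
    | zero => omega
    | succ n ih =>
      rcases Nat.eq_or_lt_of_le hN with h | h
      · -- N = 1 base case
        have hbase : ∫ t in (r ^ 1)..1, f t ≤ g 0 - ε := by
          have h1 : ∫ t in r..c, f t ≤ (c - r) * f r := key r c hr0.le hrc.le hc1.le
          have h2 : ∫ t in c..1, f t ≤ (1 - c) * f c := key c 1 (by linarith) hc1.le le_rfl
          have h3 : (∫ t in r..c, f t) + ∫ t in c..1, f t = ∫ t in r..1, f t :=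
            intervalIntegral.integral_add_adjacent_intervals
              (hfc.intervalIntegrable _ _) (hfc.intervalIntegrable _ _)
          have : g 0 = (1 - r) * f r := by simp [hg]
          rw [pow_one]
          rw [this, hε]
          nlinarith [h1, h2, h3]
        simpa [← h] using hbase
      · have hn : 1 ≤ n := by omega
        have h3 : (∫ t in (r ^ (n+1))..(r ^ n), f t) + ∫ t in (r ^ n)..1, f t
            = ∫ t in (r ^ (n+1))..1, f t :=
          intervalIntegral.integral_add_adjacent_intervals
            (hfc.intervalIntegrable _ _) (hfc.intervalIntegrable _ _)
        have h1 : ∫ t in (r ^ (n+1))..(r ^ n), f t ≤ g n := by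
          have := key (r ^ (n+1)) (r ^ n) (hrpow1 _).le (hrmono n) (hrpow2 n)
          simpa [hg] using this
        have h2 := ih hn
        rw [Finset.sum_range_succ]
        linarith
  -- tail bound
  have claimB : ∀ N : ℕ, 1 ≤ N → ∫ t in (0:ℝ)..1, f t ≤ r ^ N + ((∑' k, g k) - ε) := by
    intro N hN
    have h3 : (∫ t in (0:ℝ)..(r ^ N), f t) + ∫ t in (r ^ N)..1, f t = ∫ t in (0:ℝ)..1, f t :=
      intervalIntegral.integral_add_adjacent_intervals
        (hfc.intervalIntegrable _ _) (hfc.intervalIntegrable _ _)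
    have h1 : ∫ t in (0:ℝ)..(r ^ N), f t ≤ r ^ N := by
      have h1' : ∫ t in (0:ℝ)..(r ^ N), f t ≤ ∫ _t in (0:ℝ)..(r ^ N), (1:ℝ) := by
        apply intervalIntegral.integral_mono_on (hrpow1 N).le (hfc.intervalIntegrable _ _)
          intervalIntegrable_const
        intro x hx
        exact fle1 x hx.1 (le_trans hx.2 (hrpow2 N))
      simpa using h1'
    have h2 := claimA N hN
    have h4 : (∑ k ∈ range N, g k) ≤ ∑' k, g k := Summable.sum_le_tsum _ (fun k _ => hg0 k) hgsum
    linarith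
  -- pass to the limit
  have hlim : ∫ t in (0:ℝ)..1, f t ≤ (∑' k, g k) - ε := by
    have htend : Filter.Tendsto (fun N : ℕ => r ^ N + ((∑' k, g k) - ε)) Filter.atTop
        (nhds ((0:ℝ) + ((∑' k, g k) - ε))) :=
      Filter.Tendsto.add (tendsto_pow_atTop_nhds_zero_of_lt_one hr0.le hr1) tendsto_const_nhds
    rw [zero_add] at htend
    refine ge_of_tendsto htend ?_
    filter_upwards [Filter.eventually_ge_atTop 1] with N hN using claimB N hN
  -- identify the RHS with ∑' g
  have hRHS : ((b : ℝ) ^ σ - 1) *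
      (∑' k : ℕ, (b : ℝ) ^ (-(((k : ℝ) + 1) * σ)) * (1 - (b : ℝ) ^ (-((k : ℝ) + 1))) ^ m)
      = ∑' k, g k := by
    rw [← tsum_mul_left]
    apply tsum_congr
    intro k
    have hA : (b:ℝ) ^ (-(((k:ℝ)+1)*σ)) = r ^ (k+1) := by
      rw [show (-(((k:ℝ)+1)*σ)) = (-σ) * ((k:ℝ)+1) by ring, Real.rpow_mul hb0.le,
        show ((k:ℝ)+1) = ((k+1:ℕ):ℝ) by push_cast; ring, Real.rpow_natCast]
    have hB : (1 - (b:ℝ) ^ (-((k:ℝ)+1))) ^ m = f (r ^ (k+1)) := by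
      have : ((r:ℝ) ^ (k+1)) ^ (1/σ) = (b:ℝ) ^ (-((k:ℝ)+1)) := by
        rw [← hA, ← Real.rpow_mul hb0.le]
        congr 1
        field_simp [hσ.ne']
      simp only [hf, this]
    have hC : ((b:ℝ) ^ σ - 1) * r ^ (k+1) = r ^ k - r ^ (k+1) := by
      have hbs : (b:ℝ) ^ σ = r⁻¹ := by
        rw [hr, Real.rpow_neg hb0.le, inv_inv]
      rw [hbs, pow_succ]
      field_simp
    rw [hA, hB, ← mul_assoc, hC]
  rw [hRHS]
  calc ∫ t in (0:ℝ)..1, f t ≤ (∑' k, g k) - ε := hlim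
    _ < ∑' k, g k := by linarith
end

section
/- Let b > 1 be an integer, σ > 0 a real number, and m ≥ 1 an integer. Define w_m = (1 − b^{−σ}) ∑_{k=0}^{∞} b^{−σk} (1 − b^{−k})^m. Then b^σ · w_m > m!/(σ+1)_m, where (σ+1)_m = (σ+1)(σ+2)⋯(σ+m) is the Pochhammer symbol. -/
open Finset

private lemma pf_identity' : ∀ (m : ℕ) (σ : ℝ), 0 < σ →
    ∑ j ∈ range (m+1), (-1:ℝ)^j * (m.choose j) / (σ + j) =
      (Nat.factorial m : ℝ) / ∏ i ∈ range (m+1), (σ + i) := by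
  intro m
  induction m with
  | zero => intro σ hσ; simp
  | succ m ih =>
    intro σ hσ
    have hσ1 : (0:ℝ) < σ + 1 := by linarith
    have key : ∑ j ∈ range (m+2), (-1:ℝ)^j * ((m+1).choose j) / (σ + j) =
        (∑ j ∈ range (m+1), (-1:ℝ)^j * (m.choose j) / (σ + j))
        - ∑ j ∈ range (m+1), (-1:ℝ)^j * (m.choose j) / ((σ+1) + j) := by
      rw [Finset.sum_range_succ' (fun j => (-1:ℝ)^j * ((m+1).choose j) / (σ + j)) (m+1)]
      have h1 : ∀ j ∈ range (m+1), (-1:ℝ)^(j+1) * ((m+1).choose (j+1)) / (σ + (j+1 : ℕ)) =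
          -((-1:ℝ)^j * (m.choose j) / ((σ+1) + j)) +
          (-((-1:ℝ)^j) * (m.choose (j+1)) / (σ + (j+1:ℕ))) := by
        intro j _
        rw [Nat.choose_succ_succ]
        push_cast
        ring
      rw [Finset.sum_congr rfl h1, Finset.sum_add_distrib]
      have h2 : ∑ j ∈ range (m+1), (-((-1:ℝ)^j) * (m.choose (j+1)) / (σ + (j+1:ℕ))) =
          (∑ j ∈ range (m+1), (-1:ℝ)^j * (m.choose j) / (σ + j)) - 1/σ := by
        rw [Finset.sum_range_succ' (fun j => (-1:ℝ)^j * (m.choose j) / (σ + j)) m]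
        rw [Finset.sum_range_succ]
        simp [Nat.choose_succ_self]
        ring_nf
      rw [h2]
      simp
      ring
    rw [key, ih σ hσ, ih (σ+1) hσ1]
    have hprod1 : ∏ i ∈ range (m+2), (σ + i) = (∏ i ∈ range (m+1), (σ + i)) * (σ + (m+1)) := by
      rw [Finset.prod_range_succ]; push_cast; ring
    have hprod2 : ∏ i ∈ range (m+2), (σ + i) = (∏ i ∈ range (m+1), ((σ+1) + i)) * σ := by
      rw [Finset.prod_range_succ' (fun i => σ + (i:ℕ)) (m+1)]
      push_cast
      have : ∏ x ∈ range (m+1), (σ + ((x:ℝ) + 1)) = ∏ i ∈ range (m+1), ((σ+1) + (i:ℝ)) :=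
        Finset.prod_congr rfl (fun i _ => by ring)
      rw [this]
      ring
    have hp1 : (0:ℝ) < ∏ i ∈ range (m+1), (σ + i) :=
      Finset.prod_pos (fun i _ => by positivity)
    have hp2 : (0:ℝ) < ∏ i ∈ range (m+1), ((σ+1) + i) :=
      Finset.prod_pos (fun i _ => by positivity)
    rw [hprod1]
    have hne1 : (∏ i ∈ range (m+1), (σ + i)) ≠ 0 := ne_of_gt hp1
    have hne2 : (∏ i ∈ range (m+1), ((σ+1) + i)) ≠ 0 := ne_of_gt hp2
    have hrel : (∏ i ∈ range (m+1), ((σ+1) + i)) * σ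
        = (∏ i ∈ range (m+1), (σ + i)) * (σ + (m+1)) := by
      rw [← hprod2, hprod1]
    have hfact : (Nat.factorial (m+1) : ℝ) = (m+1) * Nat.factorial m := by
      rw [Nat.factorial_succ]; push_cast; ring
    rw [hfact]
    field_simp
    linear_combination hrel

private lemma integral_exp_mul'' (a : ℝ) (ha : a ≠ 0) (p q : ℝ) :
    ∫ u in p..q, Real.exp (a * u) = (Real.exp (a * q) - Real.exp (a * p)) / a := by
  have h : ∀ u : ℝ, HasDerivAt (fun x => Real.exp (a * x) / a) (Real.exp (a * u)) u := by
    intro u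
    have := ((Real.hasDerivAt_exp (a * u)).comp u ((hasDerivAt_id u).const_mul a))
    simpa [mul_comm, mul_div_assoc, mul_div_cancel_left₀ _ ha] using this.div_const a
  rw [intervalIntegral.integral_eq_sub_of_hasDerivAt (fun u _ => h u)
    ((Real.continuous_exp.comp (continuous_const.mul continuous_id)).intervalIntegrable p q)]
  ring

private lemma key_lt' (c σ : ℝ) (hc : 0 < c) (hσ : 0 < σ) (m : ℕ) (hm : 1 ≤ m) (k : ℕ) :
    σ * c * ∫ u in (k:ℝ)..((k:ℝ)+1), Real.exp (-(σ*c)*u) * (1 - Real.exp (-c*u))^m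
      < (1 - Real.exp (-(σ*c))) * Real.exp (-(σ*c)*(k:ℝ)) * (1 - Real.exp (-c*((k:ℝ)+1)))^m := by
  set a : ℝ := -(σ*c) with ha_def
  have hsc : 0 < σ * c := mul_pos hσ hc
  have ha : a ≠ 0 := by rw [ha_def]; exact neg_ne_zero.mpr (ne_of_gt hsc)
  have hfc : Continuous (fun u : ℝ => Real.exp (a*u) * (1 - Real.exp (-c*u))^m) := by
    continuity
  have hk0 : (0:ℝ) ≤ (k:ℝ) := Nat.cast_nonneg k
  have bound : ∀ p q t : ℝ, (k:ℝ) ≤ p → p ≤ q → q ≤ t →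
      ∫ u in p..q, Real.exp (a*u) * (1 - Real.exp (-c*u))^m
        ≤ (1 - Real.exp (-c*t))^m * ((Real.exp (a*p) - Real.exp (a*q)) / (σ*c)) := by
    intro p q t hp hpq hqt
    have h1 : ∫ u in p..q, Real.exp (a*u) * (1 - Real.exp (-c*u))^m
        ≤ ∫ u in p..q, (1 - Real.exp (-c*t))^m * Real.exp (a*u) := by
      apply intervalIntegral.integral_mono_on hpq
        (hfc.intervalIntegrable p q)
        ((continuous_const.mul (Real.continuous_exp.comp
          (continuous_const.mul continuous_id))).intervalIntegrable p q)
      intro u hu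
      show Real.exp (a*u) * (1 - Real.exp (-c*u))^m ≤ (1 - Real.exp (-c*t))^m * Real.exp (a*u)
      rw [mul_comm ((1 - Real.exp (-c*t))^m)]
      apply mul_le_mul_of_nonneg_left _ (Real.exp_nonneg _)
      apply pow_le_pow_left₀
      · have : Real.exp (-c*u) ≤ 1 := by
          apply Real.exp_le_one_iff.mpr
          nlinarith [hu.1, hk0]
        linarith
      · have : Real.exp (-c*t) ≤ Real.exp (-c*u) := by
          apply Real.exp_le_exp.mpr
          nlinarith [hu.2]
        linarith
    calc _ ≤ _ := h1
      _ = (1 - Real.exp (-c*t))^m * ((Real.exp (a*p) - Real.exp (a*q)) / (σ*c)) := by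
          rw [intervalIntegral.integral_const_mul, integral_exp_mul'' a ha]
          rw [ha_def]; ring
  have hsplit : ∫ u in (k:ℝ)..((k:ℝ)+1), Real.exp (a*u) * (1 - Real.exp (-c*u))^m
      = (∫ u in (k:ℝ)..((k:ℝ)+1/2), Real.exp (a*u) * (1 - Real.exp (-c*u))^m)
      + ∫ u in ((k:ℝ)+1/2)..((k:ℝ)+1), Real.exp (a*u) * (1 - Real.exp (-c*u))^m := by
    rw [intervalIntegral.integral_add_adjacent_intervals
      (hfc.intervalIntegrable _ _) (hfc.intervalIntegrable _ _)]
  have hb1 := bound (k:ℝ) ((k:ℝ)+1/2) ((k:ℝ)+1/2) le_rfl (by linarith) le_rfl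
  have hb2 := bound ((k:ℝ)+1/2) ((k:ℝ)+1) ((k:ℝ)+1) (by linarith) (by linarith) le_rfl
  have hE1 : 0 < (Real.exp (a*(k:ℝ)) - Real.exp (a*((k:ℝ)+1/2))) / (σ*c) := by
    apply div_pos _ hsc
    have : a*((k:ℝ)+1/2) < a*(k:ℝ) := by
      rw [ha_def]; nlinarith
    linarith [Real.exp_lt_exp.mpr this]
  have hE2 : 0 ≤ (Real.exp (a*((k:ℝ)+1/2)) - Real.exp (a*((k:ℝ)+1))) / (σ*c) := by
    apply div_nonneg _ hsc.le
    have : a*((k:ℝ)+1) ≤ a*((k:ℝ)+1/2) := by rw [ha_def]; nlinarith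
    linarith [Real.exp_le_exp.mpr this]
  have hM : (1 - Real.exp (-c*((k:ℝ)+1/2)))^m < (1 - Real.exp (-c*((k:ℝ)+1)))^m := by
    apply pow_lt_pow_left₀ _ _ (by omega)
    · have : Real.exp (-c*((k:ℝ)+1)) < Real.exp (-c*((k:ℝ)+1/2)) := by
        apply Real.exp_lt_exp.mpr; nlinarith
      linarith
    · have : Real.exp (-c*((k:ℝ)+1/2)) ≤ 1 := by
        apply Real.exp_le_one_iff.mpr; nlinarith
      linarith
  have hfinal : σ * c * ∫ u in (k:ℝ)..((k:ℝ)+1), Real.exp (a*u) * (1 - Real.exp (-c*u))^m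
      < (1 - Real.exp (-c*((k:ℝ)+1)))^m * (Real.exp (a*(k:ℝ)) - Real.exp (a*((k:ℝ)+1))) := by
    rw [hsplit]
    have step : (∫ u in (k:ℝ)..((k:ℝ)+1/2), Real.exp (a*u) * (1 - Real.exp (-c*u))^m)
        + (∫ u in ((k:ℝ)+1/2)..((k:ℝ)+1), Real.exp (a*u) * (1 - Real.exp (-c*u))^m)
        < (1 - Real.exp (-c*((k:ℝ)+1)))^m *
          ((Real.exp (a*(k:ℝ)) - Real.exp (a*((k:ℝ)+1))) / (σ*c)) := by
      have h3 : (1 - Real.exp (-c*((k:ℝ)+1/2)))^m *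
          ((Real.exp (a*(k:ℝ)) - Real.exp (a*((k:ℝ)+1/2))) / (σ*c))
          < (1 - Real.exp (-c*((k:ℝ)+1)))^m *
          ((Real.exp (a*(k:ℝ)) - Real.exp (a*((k:ℝ)+1/2))) / (σ*c)) :=
        mul_lt_mul_of_pos_right hM hE1
      have expand : (1 - Real.exp (-c*((k:ℝ)+1)))^m *
          ((Real.exp (a*(k:ℝ)) - Real.exp (a*((k:ℝ)+1))) / (σ*c))
          = (1 - Real.exp (-c*((k:ℝ)+1)))^m *
          ((Real.exp (a*(k:ℝ)) - Real.exp (a*((k:ℝ)+1/2))) / (σ*c))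
          + (1 - Real.exp (-c*((k:ℝ)+1)))^m *
          ((Real.exp (a*((k:ℝ)+1/2)) - Real.exp (a*((k:ℝ)+1))) / (σ*c)) := by ring
      have h4 : (∫ u in ((k:ℝ)+1/2)..((k:ℝ)+1), Real.exp (a*u) * (1 - Real.exp (-c*u))^m)
          ≤ (1 - Real.exp (-c*((k:ℝ)+1)))^m *
          ((Real.exp (a*((k:ℝ)+1/2)) - Real.exp (a*((k:ℝ)+1))) / (σ*c)) := hb2
      linarith
    calc σ * c * _ < σ * c * ((1 - Real.exp (-c*((k:ℝ)+1)))^m *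
          ((Real.exp (a*(k:ℝ)) - Real.exp (a*((k:ℝ)+1))) / (σ*c))) :=
            (mul_lt_mul_iff_right₀ hsc).mpr step
      _ = (1 - Real.exp (-c*((k:ℝ)+1)))^m * (Real.exp (a*(k:ℝ)) - Real.exp (a*((k:ℝ)+1))) := by
          field_simp
  have hrw : (1 - Real.exp (-c*((k:ℝ)+1)))^m * (Real.exp (a*(k:ℝ)) - Real.exp (a*((k:ℝ)+1)))
      = (1 - Real.exp a) * Real.exp (a*(k:ℝ)) * (1 - Real.exp (-c*((k:ℝ)+1)))^m := by
    rw [show a*((k:ℝ)+1) = a*(k:ℝ) + a by ring, Real.exp_add]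
    ring
  rw [← hrw]
  exact hfinal

private lemma Bk_eq' (c σ : ℝ) (hc : 0 < c) (hσ : 0 < σ) (m : ℕ) (k : ℕ) :
    σ * c * ∫ u in (k:ℝ)..((k:ℝ)+1), Real.exp (-(σ*c)*u) * (1 - Real.exp (-c*u))^m
    = ∑ j ∈ range (m+1), (σ / (σ + (j:ℝ))) * (-1:ℝ)^j * (m.choose j) *
        ((Real.exp (-((σ+(j:ℝ))*c)))^k - (Real.exp (-((σ+(j:ℝ))*c)))^(k+1)) := by
  have hpt : ∀ u : ℝ, Real.exp (-(σ*c)*u) * (1 - Real.exp (-c*u))^m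
      = ∑ j ∈ range (m+1), ((-1:ℝ)^j * (m.choose j)) * Real.exp (-((σ+(j:ℝ))*c)*u) := by
    intro u
    rw [show (1 : ℝ) - Real.exp (-c*u) = -Real.exp (-c*u) + 1 by ring, add_pow, Finset.mul_sum]
    apply Finset.sum_congr rfl
    intro j hj
    have hexp : Real.exp (-((σ+(j:ℝ))*c)*u) = Real.exp (-(σ*c)*u) * Real.exp (-c*u)^j := by
      rw [← Real.exp_nat_mul, ← Real.exp_add]
      congr 1
      ring
    rw [hexp, one_pow, neg_pow]
    ring
  have hcont : ∀ j : ℕ, Continuous (fun u : ℝ =>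
      ((-1:ℝ)^j * (m.choose j)) * Real.exp (-((σ+(j:ℝ))*c)*u)) := by
    intro j; continuity
  have : (∫ u in (k:ℝ)..((k:ℝ)+1), Real.exp (-(σ*c)*u) * (1 - Real.exp (-c*u))^m)
      = ∑ j ∈ range (m+1), ∫ u in (k:ℝ)..((k:ℝ)+1),
          ((-1:ℝ)^j * (m.choose j)) * Real.exp (-((σ+(j:ℝ))*c)*u) := by
    rw [← intervalIntegral.integral_finset_sum]
    · exact intervalIntegral.integral_congr (fun u _ => hpt u)
    · intro j hj
      exact (hcont j).intervalIntegrable _ _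
  rw [this, Finset.mul_sum]
  apply Finset.sum_congr rfl
  intro j hj
  have hsj : (0:ℝ) < σ + j := by positivity
  have haj : -((σ+(j:ℝ))*c) ≠ 0 := by
    apply neg_ne_zero.mpr; positivity
  rw [intervalIntegral.integral_const_mul, integral_exp_mul'' _ haj]
  have e1 : Real.exp (-((σ+(j:ℝ))*c) * (k:ℝ)) = (Real.exp (-((σ+(j:ℝ))*c)))^k := by
    rw [mul_comm, Real.exp_nat_mul]
  have e2 : Real.exp (-((σ+(j:ℝ))*c) * ((k:ℝ)+1)) = (Real.exp (-((σ+(j:ℝ))*c)))^(k+1) := by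
    rw [show ((k:ℝ)+1) = ((k+1 : ℕ):ℝ) by push_cast; ring, mul_comm, Real.exp_nat_mul]
  rw [e1, e2]
  field_simp
  ring

/-- For b > 1, σ > 0 and m ≥ 1, with w_m = (1 − b^{−σ}) ∑_{k=0}^∞ b^{−σk} (1 − b^{−k})^m:
b^σ · w_m > m!/(σ+1)_m. -/
theorem w_lower_bound (b : ℕ) (hb : 1 < b) (σ : ℝ) (hσ : 0 < σ) (m : ℕ) (hm : 1 ≤ m)
    (w : ℕ → ℝ)
    (hw : ∀ n : ℕ, w n = (1 - (b : ℝ) ^ (-σ)) *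
      ∑' k : ℕ, (b : ℝ) ^ (-(σ * (k : ℝ))) * (1 - (b : ℝ) ^ (-(k : ℝ))) ^ n) :
    (Nat.factorial m : ℝ) / ∏ i ∈ Finset.range m, (σ + 1 + (i : ℝ)) < (b : ℝ) ^ σ * w m := by
  have hb1 : (1:ℝ) < (b:ℝ) := by exact_mod_cast hb
  have hb0 : (0:ℝ) < (b:ℝ) := by linarith
  set c : ℝ := Real.log b with hc_def
  have hc : 0 < c := Real.log_pos hb1
  have hsc : 0 < σ * c := mul_pos hσ hc
  have hrpow : ∀ x : ℝ, (b:ℝ) ^ x = Real.exp (c * x) := fun x => Real.rpow_def_of_pos hb0 x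
  -- the terms of the series
  set A : ℕ → ℝ := fun k =>
    (1 - Real.exp (-(σ*c))) * Real.exp (-(σ*c)*(k:ℝ)) * (1 - Real.exp (-c*((k:ℝ)+1)))^m
    with hA_def
  set B : ℕ → ℝ := fun k =>
    σ * c * ∫ u in (k:ℝ)..((k:ℝ)+1), Real.exp (-(σ*c)*u) * (1 - Real.exp (-c*u))^m
    with hB_def
  have hAB : ∀ k, B k < A k := fun k => key_lt' c σ hc hσ m hm k
  -- summability of A
  have hr0 : (0:ℝ) < Real.exp (-(σ*c)) := Real.exp_pos _
  have hr1 : Real.exp (-(σ*c)) < 1 := Real.exp_lt_one_iff.mpr (by linarith)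
  have hAval : ∀ k, A k = ((1 - Real.exp (-(σ*c))) * (1 - Real.exp (-c*((k:ℝ)+1)))^m)
      * (Real.exp (-(σ*c)))^k := by
    intro k
    simp only [hA_def]
    have : Real.exp (-(σ*c)*(k:ℝ)) = (Real.exp (-(σ*c)))^k := by
      rw [mul_comm, Real.exp_nat_mul]
    rw [this]; ring
  have hfac_nonneg : ∀ t : ℝ, 0 ≤ t → 0 ≤ (1 - Real.exp (-c*t))^m ∧ (1 - Real.exp (-c*t))^m ≤ 1 := by
    intro t ht
    have h1 : Real.exp (-c*t) ≤ 1 := Real.exp_le_one_iff.mpr (by nlinarith)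
    have h2 : 0 < Real.exp (-c*t) := Real.exp_pos _
    constructor
    · apply pow_nonneg; linarith
    · apply pow_le_one₀ (by linarith) (by linarith)
  have hAnn : ∀ k, 0 ≤ A k := by
    intro k
    rw [hAval k]
    have hk : (0:ℝ) ≤ (k:ℝ)+1 := by positivity
    exact mul_nonneg (mul_nonneg (by linarith : (0:ℝ) ≤ 1 - Real.exp (-(σ*c)))
      (hfac_nonneg ((k:ℝ)+1) hk).1) (pow_nonneg hr0.le k)
  have hAle : ∀ k, A k ≤ (Real.exp (-(σ*c)))^k := by
    intro k
    rw [hAval k]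
    have hk : (0:ℝ) ≤ (k:ℝ)+1 := by positivity
    obtain ⟨h1, h2⟩ := hfac_nonneg ((k:ℝ)+1) hk
    have hp := pow_nonneg hr0.le k
    have hle1 : (1 - Real.exp (-(σ*c))) * (1 - Real.exp (-c*((k:ℝ)+1)))^m ≤ 1 := by
      nlinarith
    calc (1 - Real.exp (-(σ*c))) * (1 - Real.exp (-c*((k:ℝ)+1)))^m * (Real.exp (-(σ*c)))^k
        ≤ 1 * (Real.exp (-(σ*c)))^k := mul_le_mul_of_nonneg_right hle1 hp
      _ = (Real.exp (-(σ*c)))^k := one_mul _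
  have hgeom : Summable (fun k : ℕ => (Real.exp (-(σ*c)))^k) :=
    summable_geometric_of_lt_one hr0.le hr1
  have hAsum : Summable A := Summable.of_nonneg_of_le hAnn hAle hgeom
  -- summability of B
  have hBnn : ∀ k, 0 ≤ B k := by
    intro k
    simp only [hB_def]
    apply mul_nonneg hsc.le
    apply intervalIntegral.integral_nonneg (by linarith : (k:ℝ) ≤ (k:ℝ)+1)
    intro u hu
    have hu0 : (0:ℝ) ≤ u := le_trans (Nat.cast_nonneg k) hu.1
    have := (hfac_nonneg u hu0).1
    have := Real.exp_nonneg (-(σ*c)*u)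
    positivity
  have hBsum : Summable B := Summable.of_nonneg_of_le hBnn (fun k => (hAB k).le) hAsum
  -- tsum B < tsum A
  have hlt : ∑' k, B k < ∑' k, A k := Summable.tsum_lt_tsum (fun k => (hAB k).le) (hAB 0) hBsum hAsum
  -- compute tsum B
  have hy : ∀ j : ℕ, 0 < Real.exp (-((σ+(j:ℝ))*c)) ∧ Real.exp (-((σ+(j:ℝ))*c)) < 1 := by
    intro j
    refine ⟨Real.exp_pos _, Real.exp_lt_one_iff.mpr ?_⟩
    have : (0:ℝ) < (σ+(j:ℝ))*c := by positivity
    linarith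
  have hysummable : ∀ j : ℕ, Summable (fun k : ℕ =>
      (Real.exp (-((σ+(j:ℝ))*c)))^k - (Real.exp (-((σ+(j:ℝ))*c)))^(k+1)) := by
    intro j
    obtain ⟨h0, h1⟩ := hy j
    have hg := summable_geometric_of_lt_one h0.le h1
    have hg2 : Summable (fun k : ℕ => (Real.exp (-((σ+(j:ℝ))*c)))^(k+1)) := by
      simp_rw [pow_succ]
      exact hg.mul_right _
    exact hg.sub hg2
  have hytsum : ∀ j : ℕ, ∑' k : ℕ,
      ((Real.exp (-((σ+(j:ℝ))*c)))^k - (Real.exp (-((σ+(j:ℝ))*c)))^(k+1)) = 1 := by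
    intro j
    obtain ⟨h0, h1⟩ := hy j
    have hg := summable_geometric_of_lt_one h0.le h1
    have hg2 : Summable (fun k : ℕ => (Real.exp (-((σ+(j:ℝ))*c)))^(k+1)) := by
      simp_rw [pow_succ]
      exact hg.mul_right _
    rw [Summable.tsum_sub hg hg2, tsum_geometric_of_lt_one h0.le h1]
    have : ∑' k : ℕ, (Real.exp (-((σ+(j:ℝ))*c)))^(k+1)
        = (∑' k : ℕ, (Real.exp (-((σ+(j:ℝ))*c)))^k) * Real.exp (-((σ+(j:ℝ))*c)) := by
      simp_rw [pow_succ]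
      exact tsum_mul_right
    rw [this, tsum_geometric_of_lt_one h0.le h1]
    have hne : 1 - Real.exp (-((σ+(j:ℝ))*c)) ≠ 0 := by linarith
    field_simp
  have hBtsum : ∑' k, B k = (Nat.factorial m : ℝ) / ∏ i ∈ range m, (σ + 1 + (i:ℝ)) := by
    have step1 : ∑' k, B k = ∑ j ∈ range (m+1), (σ / (σ + (j:ℝ))) * (-1:ℝ)^j * (m.choose j) := by
      have : ∀ k : ℕ, B k = ∑ j ∈ range (m+1), (σ / (σ + (j:ℝ))) * (-1:ℝ)^j * (m.choose j) *
          ((Real.exp (-((σ+(j:ℝ))*c)))^k - (Real.exp (-((σ+(j:ℝ))*c)))^(k+1)) :=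
        fun k => Bk_eq' c σ hc hσ m k
      rw [tsum_congr this, Summable.tsum_finsetSum (fun j _ => (hysummable j).mul_left _)]
      apply Finset.sum_congr rfl
      intro j hj
      rw [tsum_mul_left, hytsum j, mul_one]
    rw [step1]
    have step2 : ∑ j ∈ range (m+1), (σ / (σ + (j:ℝ))) * (-1:ℝ)^j * (m.choose j)
        = σ * ∑ j ∈ range (m+1), (-1:ℝ)^j * (m.choose j) / (σ + (j:ℝ)) := by
      rw [Finset.mul_sum]
      apply Finset.sum_congr rfl
      intro j hj
      ring
    rw [step2, pf_identity' m σ hσ]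
    have hprod : ∏ i ∈ range (m+1), (σ + (i:ℝ)) = σ * ∏ i ∈ range m, (σ + 1 + (i:ℝ)) := by
      rw [Finset.prod_range_succ' (fun i => σ + (i:ℕ)) m]
      push_cast
      have : ∏ x ∈ range m, (σ + ((x:ℝ) + 1)) = ∏ i ∈ range m, (σ + 1 + (i:ℝ)) :=
        Finset.prod_congr rfl (fun i _ => by ring)
      rw [this]
      ring
    rw [hprod]
    have hP : (0:ℝ) < ∏ i ∈ range m, (σ + 1 + (i:ℝ)) :=
      Finset.prod_pos (fun i _ => by positivity)
    field_simp
  -- compute b^σ * w m = tsum A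
  have hwA : (b : ℝ) ^ σ * w m = ∑' k, A k := by
    rw [hw m]
    set a : ℕ → ℝ := fun k => Real.exp (-(σ*c)*(k:ℝ)) * (1 - Real.exp (-c*(k:ℝ)))^m with ha_def
    have hterm : ∀ k : ℕ, (b : ℝ) ^ (-(σ * (k : ℝ))) * (1 - (b : ℝ) ^ (-(k : ℝ))) ^ m = a k := by
      intro k
      simp only [hrpow, ha_def]
      have e1 : c * -(σ * (k:ℝ)) = -(σ*c)*(k:ℝ) := by ring
      have e2 : c * -(k:ℝ) = -c*(k:ℝ) := by ring
      rw [e1, e2]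
    rw [tsum_congr hterm]
    have hann : ∀ k, 0 ≤ a k := by
      intro k
      simp only [ha_def]
      have := (hfac_nonneg (k:ℝ) (Nat.cast_nonneg k)).1
      have := Real.exp_nonneg (-(σ*c)*(k:ℝ))
      positivity
    have hale : ∀ k, a k ≤ (Real.exp (-(σ*c)))^k := by
      intro k
      simp only [ha_def]
      obtain ⟨h1, h2⟩ := hfac_nonneg (k:ℝ) (Nat.cast_nonneg k)
      have e : Real.exp (-(σ*c)*(k:ℝ)) = (Real.exp (-(σ*c)))^k := by
        rw [mul_comm, Real.exp_nat_mul]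
      rw [e]
      have hp := pow_nonneg hr0.le k
      exact mul_le_of_le_one_right hp h2
    have hasum : Summable a := Summable.of_nonneg_of_le hann hale hgeom
    have ha0 : a 0 = 0 := by
      simp only [ha_def]
      simp [zero_pow (by omega : m ≠ 0)]
    have hshift := Summable.sum_add_tsum_nat_add 1 hasum
    rw [Finset.sum_range_one, ha0, zero_add] at hshift
    have hAa : ∀ k : ℕ, A k = (Real.exp (σ*c) * (1 - Real.exp (-(σ*c)))) * a (k+1) := by
      intro k
      simp only [hA_def, ha_def]
      push_cast
      have e3 : Real.exp (σ*c) * Real.exp (-(σ*c)*((k:ℝ)+1)) = Real.exp (-(σ*c)*(k:ℝ)) := by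
        rw [← Real.exp_add]; congr 1; ring
      calc (1 - Real.exp (-(σ*c))) * Real.exp (-(σ*c)*(k:ℝ)) * (1 - Real.exp (-c*((k:ℝ)+1)))^m
          = (1 - Real.exp (-(σ*c))) * (Real.exp (σ*c) * Real.exp (-(σ*c)*((k:ℝ)+1)))
            * (1 - Real.exp (-c*((k:ℝ)+1)))^m := by rw [e3]
        _ = Real.exp (σ*c) * (1 - Real.exp (-(σ*c))) *
            (Real.exp (-(σ*c)*((k:ℝ)+1)) * (1 - Real.exp (-c*((k:ℝ)+1)))^m) := by ring
    have hAtsum : ∑' k, A k = (Real.exp (σ*c) * (1 - Real.exp (-(σ*c)))) * ∑' k, a (k+1) := by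
      rw [tsum_congr hAa]
      exact tsum_mul_left
    rw [hAtsum, hshift]
    rw [hrpow σ, hrpow (-σ)]
    have e4 : c * σ = σ * c := by ring
    have e5 : c * -σ = -(σ*c) := by ring
    rw [e4, e5]
    ring
  rw [hwA, ← hBtsum]
  exact hlt
end
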